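/- arXiv:2004.12121 — 6 statements merged into one kernel-verified Lean document; each statement's English description precedes it below -/
import Mathlib

section
/- For any based arrow diagram D obtained from a knot-diagram resolution of an oriented based spherical curve, the counts d↑(D), d⊥(D), and d←(D)+d→(D) of embedded 2-arrow sub-diagrams of the four based types are unchanged when the base point is moved past one arrow endpoint; hence these counts depend only on the underlying spherical curve. -/
open scoped Classical

/-- A based arrow diagram (oriented Gauss word) with `n` arrows: each arrow has a
tail and a head among the `2n` positions on the circle read from the base point,
and all `2n` endpoints are distinct. -/
structure ArrowDiagram (n : ℕ) where
  tail : Fin n → Fin (2 * n)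
  head : Fin n → Fin (2 * n)
  inj : Function.Injective (fun p : Fin n × Bool => if p.2 then head p.1 else tail p.1)

namespace ArrowDiagram

variable {n : ℕ}

/-- The endpoint of arrow `a` read first from the base point. -/
def first (D : ArrowDiagram n) (a : Fin n) : Fin (2 * n) := min (D.tail a) (D.head a)

/-- The endpoint of arrow `a` read second from the base point. -/
def second (D : ArrowDiagram n) (a : Fin n) : Fin (2 * n) := max (D.tail a) (D.head a)

/-- `a` and `b` interlock, with `a` read first: their endpoints alternate. -/
def Interlocked (D : ArrowDiagram n) (a b : Fin n) : Prop :=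
  D.first a < D.first b ∧ D.first b < D.second a ∧ D.second a < D.second b

/-- The tail of arrow `a` is read before its head. -/
def TailFirst (D : ArrowDiagram n) (a : Fin n) : Prop := D.tail a < D.head a

/-- Count of interlocked pairs of type `d↑`. -/
noncomputable def dUp (D : ArrowDiagram n) : ℕ :=
  (Finset.univ.filter (fun p : Fin n × Fin n =>
    D.Interlocked p.1 p.2 ∧ D.TailFirst p.1 ∧ ¬ D.TailFirst p.2)).card

/-- Count of interlocked pairs of type `d←`. -/
noncomputable def dLeft (D : ArrowDiagram n) : ℕ :=
  (Finset.univ.filter (fun p : Fin n × Fin n =>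
    D.Interlocked p.1 p.2 ∧ D.TailFirst p.1 ∧ D.TailFirst p.2)).card

/-- Count of interlocked pairs of type `d→`. -/
noncomputable def dRight (D : ArrowDiagram n) : ℕ :=
  (Finset.univ.filter (fun p : Fin n × Fin n =>
    D.Interlocked p.1 p.2 ∧ ¬ D.TailFirst p.1 ∧ ¬ D.TailFirst p.2)).card

/-- Count of interlocked pairs of type `d⊥`. -/
noncomputable def dDown (D : ArrowDiagram n) : ℕ :=
  (Finset.univ.filter (fun p : Fin n × Fin n =>
    D.Interlocked p.1 p.2 ∧ ¬ D.TailFirst p.1 ∧ D.TailFirst p.2)).card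

/-- `p` lies strictly inside the span of arrow `X`. -/
def Inside (D : ArrowDiagram n) (X : Fin n) (p : Fin (2 * n)) : Prop :=
  D.first X < p ∧ p < D.second X

/-- `Y` crosses `X` from left to right: its tail lies inside the span of `X`,
its head outside. -/
def CrossesLR (D : ArrowDiagram n) (X Y : Fin n) : Prop :=
  Y ≠ X ∧ D.Inside X (D.tail Y) ∧ ¬ D.Inside X (D.head Y)

/-- `Y` crosses `X` from right to left: its head lies inside the span of `X`,
its tail outside. -/
def CrossesRL (D : ArrowDiagram n) (X Y : Fin n) : Prop :=
  Y ≠ X ∧ D.Inside X (D.head Y) ∧ ¬ D.Inside X (D.tail Y)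

/-- `Y` is interleaved with `X`: exactly one of its endpoints lies inside the
span of `X`. -/
def Interleaved (D : ArrowDiagram n) (X Y : Fin n) : Prop :=
  D.CrossesLR X Y ∨ D.CrossesRL X Y

noncomputable def lrCount (D : ArrowDiagram n) (X : Fin n) : ℕ :=
  (Finset.univ.filter (fun Y => D.CrossesLR X Y)).card

noncomputable def rlCount (D : ArrowDiagram n) (X : Fin n) : ℕ :=
  (Finset.univ.filter (fun Y => D.CrossesRL X Y)).card

noncomputable def interleavedCount (D : ArrowDiagram n) (X : Fin n) : ℕ :=
  (Finset.univ.filter (fun Y => D.Interleaved X Y)).card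

/-- The balance condition satisfied by realizable diagrams (Lemma A): for every
arrow, equally many arrows cross it left-to-right as right-to-left. -/
def Balanced (D : ArrowDiagram n) : Prop := ∀ X, D.lrCount X = D.rlCount X

/-- `D'` is obtained from `D` by moving the base point past the endpoint at
position `0` (a cyclic shift of the underlying oriented Gauss word by one symbol). -/
def ShiftOf (D' D : ArrowDiagram n) : Prop :=
  ∀ a, ((D'.tail a : ℕ) = ((D.tail a : ℕ) + (2 * n - 1)) % (2 * n)) ∧
       ((D'.head a : ℕ) = ((D.head a : ℕ) + (2 * n - 1)) % (2 * n))

end ArrowDiagram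

section AuxTest

lemma shiftVal (N p : ℕ) (hN : 0 < N) (hp : p < N) :
    (p + (N - 1)) % N = if p = 0 then N - 1 else p - 1 := by
  rcases p with _ | k
  · simp [Nat.mod_eq_of_lt (by omega : N - 1 < N)]
  · have h1 : k + 1 + (N - 1) = k + N := by omega
    rw [h1, Nat.add_mod_right, Nat.mod_eq_of_lt (by omega)]
    simp

lemma finValMin {m : ℕ} (a b : Fin m) : ((min a b : Fin m) : ℕ) = min (a : ℕ) (b : ℕ) := by
  rcases le_total a b with h | h
  · rw [min_eq_left h, min_eq_left (Fin.le_def.mp h)]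
  · rw [min_eq_right h, min_eq_right (Fin.le_def.mp h)]

lemma finValMax {m : ℕ} (a b : Fin m) : ((max a b : Fin m) : ℕ) = max (a : ℕ) (b : ℕ) := by
  rcases le_total a b with h | h
  · rw [max_eq_right h, max_eq_right (Fin.le_def.mp h)]
  · rw [max_eq_left h, max_eq_left (Fin.le_def.mp h)]

lemma card_split {m : ℕ} (c : Fin m) (P : Fin m × Fin m → Prop) (hcc : ¬ P (c, c)) :
    (Finset.univ.filter P).card
      = (Finset.univ.filter fun p : Fin m × Fin m => P p ∧ p.1 ≠ c ∧ p.2 ≠ c).card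
        + (Finset.univ.filter fun Y : Fin m => P (c, Y)).card
        + (Finset.univ.filter fun Y : Fin m => P (Y, c)).card := by
  classical
  have h1 := Finset.card_filter_add_card_filter_not
    (s := Finset.univ.filter P) (p := fun p : Fin m × Fin m => p.1 = c)
  have h2 := Finset.card_filter_add_card_filter_not
    (s := (Finset.univ.filter P).filter (fun p : Fin m × Fin m => ¬ p.1 = c))
    (p := fun p : Fin m × Fin m => p.2 = c)
  have hB : ((Finset.univ.filter P).filter (fun p : Fin m × Fin m => p.1 = c)).card
      = (Finset.univ.filter fun Y : Fin m => P (c, Y)).card := by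
    rw [show ((Finset.univ.filter P).filter (fun p : Fin m × Fin m => p.1 = c))
        = (Finset.univ.filter fun Y : Fin m => P (c, Y)).image (fun Y => (c, Y)) from ?_]
    · exact Finset.card_image_of_injective _ (fun a b h => by simpa using (Prod.ext_iff.mp h).2)
    · ext p
      simp only [Finset.mem_filter, Finset.mem_univ, true_and, Finset.mem_image]
      constructor
      · rintro ⟨h1, h2⟩
        exact ⟨p.2, by rw [show ((c, p.2) : Fin m × Fin m) = p from Prod.ext h2.symm rfl]; exact h1,
          Prod.ext h2.symm rfl⟩
      · rintro ⟨Y, hY, rfl⟩; exact ⟨hY, rfl⟩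
  have hC : (((Finset.univ.filter P).filter (fun p : Fin m × Fin m => ¬ p.1 = c)).filter
        (fun p : Fin m × Fin m => p.2 = c)).card
      = (Finset.univ.filter fun Y : Fin m => P (Y, c)).card := by
    rw [show (((Finset.univ.filter P).filter (fun p : Fin m × Fin m => ¬ p.1 = c)).filter
        (fun p : Fin m × Fin m => p.2 = c))
        = (Finset.univ.filter fun Y : Fin m => P (Y, c)).image (fun Y => (Y, c)) from ?_]
    · exact Finset.card_image_of_injective _ (fun a b h => by simpa using (Prod.ext_iff.mp h).1)
    · ext p
      simp only [Finset.mem_filter, Finset.mem_univ, true_and, Finset.mem_image]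
      constructor
      · rintro ⟨⟨h1, h2⟩, h3⟩
        exact ⟨p.1, by rw [show ((p.1, c) : Fin m × Fin m) = p from Prod.ext rfl h3.symm]; exact h1,
          Prod.ext rfl h3.symm⟩
      · rintro ⟨Y, hY, rfl⟩
        refine ⟨⟨hY, fun h => hcc ?_⟩, rfl⟩
        have h' : Y = c := h
        subst h'
        exact hY
  have hA : (((Finset.univ.filter P).filter (fun p : Fin m × Fin m => ¬ p.1 = c)).filter
        (fun p : Fin m × Fin m => ¬ p.2 = c))
      = (Finset.univ.filter fun p : Fin m × Fin m => P p ∧ p.1 ≠ c ∧ p.2 ≠ c) := by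
    ext p
    simp only [Finset.mem_filter, Finset.mem_univ, true_and]
    tauto
  rw [hA] at h2
  omega

lemma card_split' {m : ℕ} (c : Fin m) (P : Fin m → Fin m → Prop) (hcc : ¬ P c c) :
    (Finset.univ.filter fun p : Fin m × Fin m => P p.1 p.2).card
      = (Finset.univ.filter fun p : Fin m × Fin m => P p.1 p.2 ∧ p.1 ≠ c ∧ p.2 ≠ c).card
        + (Finset.univ.filter fun Y : Fin m => P c Y).card
        + (Finset.univ.filter fun Y : Fin m => P Y c).card :=
  card_split c (fun p => P p.1 p.2) hcc

end AuxTest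

set_option maxHeartbeats 1000000

open ArrowDiagram in
/-- For a realizable based arrow diagram (realizability abstracted by the balance
condition of Lemma A), the counts `d↑`, `d⊥` and `d← + d→` are unchanged when the
base point is moved past one arrow endpoint; hence they depend only on the
underlying spherical curve. -/
theorem counts_base_point_independent {n : ℕ} (D D' : ArrowDiagram n)
    (hreal : D.Balanced) (hshift : D'.ShiftOf D) :
    D'.dUp = D.dUp ∧ D'.dDown = D.dDown ∧
      D'.dLeft + D'.dRight = D.dLeft + D.dRight := by
  classical
  rcases Nat.eq_zero_or_pos n with hn | hn
  · subst hn
    refine ⟨?_, ?_, ?_⟩ <;> simp [dUp, dDown, dLeft, dRight]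
  have h2n : 0 < 2 * n := by omega
  -- injectivity consequences
  have inj2 : ∀ (a b : Fin n) (x y : Bool),
      (if x then D.head a else D.tail a) = (if y then D.head b else D.tail b) → a = b ∧ x = y := by
    intro a b x y h
    have h2 := D.inj (a₁ := (a, x)) (a₂ := (b, y)) (by simpa using h)
    exact ⟨congrArg Prod.fst h2, congrArg Prod.snd h2⟩
  have htailhead : ∀ a b : Fin n, D.tail a ≠ D.head b := by
    intro a b h
    have := (inj2 a b false true (by simpa using h)).2
    simp at this
  have htt : ∀ a b : Fin n, D.tail a = D.tail b → a = b :=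
    fun a b h => (inj2 a b false false (by simpa using h)).1
  have hhh : ∀ a b : Fin n, D.head a = D.head b → a = b :=
    fun a b h => (inj2 a b true true (by simpa using h)).1
  have hth_self : ∀ a : Fin n, (D.tail a : ℕ) ≠ (D.head a : ℕ) :=
    fun a h => htailhead a a (Fin.ext h)
  -- the arrow with an endpoint at position 0
  have hbij : Function.Bijective
      (fun p : Fin n × Bool => if p.2 then D.head p.1 else D.tail p.1) := by
    rw [Fintype.bijective_iff_injective_and_card]
    refine ⟨D.inj, ?_⟩
    simp [Fintype.card_prod]
    ring
  obtain ⟨⟨c, b⟩, hc⟩ := hbij.2 ⟨0, h2n⟩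
  have hc0 : (D.tail c : ℕ) = 0 ∨ (D.head c : ℕ) = 0 := by
    cases b
    · left; simpa using congrArg Fin.val hc
    · right; simpa using congrArg Fin.val hc
  -- value computations
  have hfcv : ∀ (E : ArrowDiagram n) (a : Fin n),
      (E.first a : ℕ) = min (E.tail a : ℕ) (E.head a : ℕ) := by
    intro E a
    simp only [ArrowDiagram.first]
    exact finValMin _ _
  have hscv : ∀ (E : ArrowDiagram n) (a : Fin n),
      (E.second a : ℕ) = max (E.tail a : ℕ) (E.head a : ℕ) := by
    intro E a
    simp only [ArrowDiagram.second]
    exact finValMax _ _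
  have ht' : ∀ a : Fin n,
      (D'.tail a : ℕ) = if (D.tail a : ℕ) = 0 then 2 * n - 1 else (D.tail a : ℕ) - 1 := by
    intro a
    rw [(hshift a).1]
    exact shiftVal _ _ h2n (D.tail a).isLt
  have hh' : ∀ a : Fin n,
      (D'.head a : ℕ) = if (D.head a : ℕ) = 0 then 2 * n - 1 else (D.head a : ℕ) - 1 := by
    intro a
    rw [(hshift a).2]
    exact shiftVal _ _ h2n (D.head a).isLt
  have hvals : ∀ a : Fin n, a ≠ c →
      (D.tail a : ℕ) ≠ (D.tail c : ℕ) ∧ (D.head a : ℕ) ≠ (D.head c : ℕ) ∧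
      (D.tail a : ℕ) ≠ (D.head c : ℕ) ∧ (D.head a : ℕ) ≠ (D.tail c : ℕ) := by
    intro a ha
    exact ⟨fun h => ha (htt a c (Fin.ext h)), fun h => ha (hhh a c (Fin.ext h)),
      fun h => htailhead a c (Fin.ext h), fun h => htailhead c a (Fin.ext h).symm⟩
  have hnc : ∀ a : Fin n, a ≠ c →
      (D'.tail a : ℕ) = (D.tail a : ℕ) - 1 ∧ (D'.head a : ℕ) = (D.head a : ℕ) - 1 ∧
      1 ≤ (D.tail a : ℕ) ∧ 1 ≤ (D.head a : ℕ) := by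
    intro a ha
    obtain ⟨v1, v2, v3, v4⟩ := hvals a ha
    have h1 : (D.tail a : ℕ) ≠ 0 := by rcases hc0 with h | h <;> omega
    have h2 : (D.head a : ℕ) ≠ 0 := by rcases hc0 with h | h <;> omega
    rw [ht' a, hh' a, if_neg h1, if_neg h2]
    omega
  have hFS : ∀ a : Fin n, a ≠ c →
      (D'.first a : ℕ) = (D.first a : ℕ) - 1 ∧ (D'.second a : ℕ) = (D.second a : ℕ) - 1 ∧
      1 ≤ (D.first a : ℕ) ∧ (D.first a : ℕ) < (D.second a : ℕ) ∧
      (D.first a : ℕ) ≠ (D.second c : ℕ) ∧ (D.second a : ℕ) ≠ (D.second c : ℕ) ∧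
      (D.second a : ℕ) < 2 * n := by
    intro a ha
    obtain ⟨v1, v2, v3, v4⟩ := hvals a ha
    obtain ⟨e1, e2, e3, e4⟩ := hnc a ha
    have hne := hth_self a
    have l1 := (D.tail a).isLt
    have l2 := (D.head a).isLt
    rw [hfcv D a, hscv D a, hfcv D' a, hscv D' a, hscv D c, e1, e2]
    omega
  have hCC : (D.first c : ℕ) = 0 ∧ 1 ≤ (D.second c : ℕ) ∧ (D.second c : ℕ) < 2 * n ∧
      (D'.first c : ℕ) = (D.second c : ℕ) - 1 ∧ (D'.second c : ℕ) = 2 * n - 1 := by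
    have hne := hth_self c
    have l1 := (D.tail c).isLt
    have l2 := (D.head c).isLt
    rw [hfcv D c, hscv D c, hfcv D' c, hscv D' c, ht' c, hh' c]
    rcases hc0 with h | h
    · rw [if_pos h, if_neg (by omega)]
      omega
    · rw [if_neg (by omega), if_pos h]
      omega
  have hTF : ∀ a : Fin n, a ≠ c → (D'.TailFirst a ↔ D.TailFirst a) := by
    intro a ha
    obtain ⟨e1, e2, e3, e4⟩ := hnc a ha
    simp only [ArrowDiagram.TailFirst, Fin.lt_def, e1, e2]
    omega
  have hTFc : D'.TailFirst c ↔ ¬ D.TailFirst c := by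
    have hne := hth_self c
    have l1 := (D.tail c).isLt
    have l2 := (D.head c).isLt
    simp only [ArrowDiagram.TailFirst, Fin.lt_def, ht' c, hh' c]
    rcases hc0 with h | h
    · rw [if_pos h, if_neg (by omega)]
      omega
    · rw [if_neg (by omega), if_pos h]
      omega
  have hInt : ∀ a b' : Fin n, a ≠ c → b' ≠ c → (D'.Interlocked a b' ↔ D.Interlocked a b') := by
    intro a b' ha hb
    obtain ⟨f1, f2, f3, f4, f5, f6, f7⟩ := hFS a ha
    obtain ⟨g1, g2, g3, g4, g5, g6, g7⟩ := hFS b' hb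
    simp only [ArrowDiagram.Interlocked, Fin.lt_def, f1, f2, g1, g2]
    omega
  have hIcc : ∀ (E : ArrowDiagram n) (x : Fin n), ¬ E.Interlocked x x :=
    fun E x h => lt_irrefl _ h.1
  have hnotYc : ∀ b' : Fin n, ¬ D.Interlocked b' c := by
    intro b' h
    have h1 := Fin.lt_def.mp h.1
    have h2 := hCC.1
    omega
  have hnotcY' : ∀ b' : Fin n, ¬ D'.Interlocked c b' := by
    intro b' h
    have h3 := Fin.lt_def.mp h.2.2
    have h4 := (D'.second b').isLt
    have h5 := hCC.2.2.2.2
    omega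
  have hYc' : ∀ Y : Fin n, Y ≠ c → (D'.Interlocked Y c ↔ D.Interlocked c Y) := by
    intro Y hY
    obtain ⟨f1, f2, f3, f4, f5, f6, f7⟩ := hFS Y hY
    obtain ⟨c1, c2, c3, c4, c5⟩ := hCC
    simp only [ArrowDiagram.Interlocked, Fin.lt_def, f1, f2, c1, c4, c5]
    omega
  have hXLR : ∀ Y : Fin n, D.CrossesLR c Y ↔ (D.Interlocked c Y ∧ D.TailFirst Y) := by
    intro Y
    by_cases hY : Y = c
    · subst hY
      constructor
      · rintro ⟨h, -, -⟩; exact absurd rfl h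
      · rintro ⟨h, -⟩; exact absurd h (hIcc D _)
    · obtain ⟨v1, v2, v3, v4⟩ := hvals Y hY
      obtain ⟨e1, e2, e3, e4⟩ := hnc Y hY
      obtain ⟨c1, c2, c3, c4, c5⟩ := hCC
      have hne := hth_self Y
      have hfY := hfcv D Y
      have hsY := hscv D Y
      have hsc := hscv D c
      have l1 := (D.tail Y).isLt
      have l2 := (D.head Y).isLt
      simp only [ArrowDiagram.CrossesLR, ArrowDiagram.Inside, ArrowDiagram.Interlocked,
        ArrowDiagram.TailFirst, Fin.lt_def, ne_eq, hY, not_false_eq_true, true_and]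
      rw [hfY, hsY, c1]
      omega
  have hXRL : ∀ Y : Fin n, D.CrossesRL c Y ↔ (D.Interlocked c Y ∧ ¬ D.TailFirst Y) := by
    intro Y
    by_cases hY : Y = c
    · subst hY
      constructor
      · rintro ⟨h, -, -⟩; exact absurd rfl h
      · rintro ⟨h, -⟩; exact absurd h (hIcc D _)
    · obtain ⟨v1, v2, v3, v4⟩ := hvals Y hY
      obtain ⟨e1, e2, e3, e4⟩ := hnc Y hY
      obtain ⟨c1, c2, c3, c4, c5⟩ := hCC
      have hne := hth_self Y
      have hfY := hfcv D Y
      have hsY := hscv D Y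
      have hsc := hscv D c
      have l1 := (D.tail Y).isLt
      have l2 := (D.head Y).isLt
      simp only [ArrowDiagram.CrossesRL, ArrowDiagram.Inside, ArrowDiagram.Interlocked,
        ArrowDiagram.TailFirst, Fin.lt_def, ne_eq, hY, not_false_eq_true, true_and]
      rw [hfY, hsY, c1]
      omega
  -- counting
  have hzeroset : ∀ (Q : Fin n → Prop) (inst : DecidablePred Q), (∀ Y, ¬ Q Y) →
      (@Finset.filter _ Q inst Finset.univ).card = 0 := by
    intro Q inst hQ
    rw [Finset.filter_false_of_mem (fun x _ => hQ x)]
    exact Finset.card_empty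
  have hLReq : (Finset.univ.filter fun Y : Fin n => D.CrossesLR c Y).card
      = (Finset.univ.filter fun Y : Fin n => D.CrossesRL c Y).card := hreal c
  have sUp : (Finset.univ.filter fun p : Fin n × Fin n =>
      D.Interlocked p.1 p.2 ∧ D.TailFirst p.1 ∧ ¬ D.TailFirst p.2).card
      = (Finset.univ.filter fun p : Fin n × Fin n =>
          (D.Interlocked p.1 p.2 ∧ D.TailFirst p.1 ∧ ¬ D.TailFirst p.2) ∧ p.1 ≠ c ∧ p.2 ≠ c).card
        + (Finset.univ.filter fun Y : Fin n =>
            D.Interlocked c Y ∧ D.TailFirst c ∧ ¬ D.TailFirst Y).card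
        + (Finset.univ.filter fun Y : Fin n =>
            D.Interlocked Y c ∧ D.TailFirst Y ∧ ¬ D.TailFirst c).card := by
    convert card_split' c (fun a b' => D.Interlocked a b' ∧ D.TailFirst a ∧ ¬ D.TailFirst b')
      (fun h => hIcc D c h.1) using 2 <;> congr!
  have sUp' : (Finset.univ.filter fun p : Fin n × Fin n =>
      D'.Interlocked p.1 p.2 ∧ D'.TailFirst p.1 ∧ ¬ D'.TailFirst p.2).card
      = (Finset.univ.filter fun p : Fin n × Fin n =>
          (D'.Interlocked p.1 p.2 ∧ D'.TailFirst p.1 ∧ ¬ D'.TailFirst p.2) ∧ p.1 ≠ c ∧ p.2 ≠ c).card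
        + (Finset.univ.filter fun Y : Fin n =>
            D'.Interlocked c Y ∧ D'.TailFirst c ∧ ¬ D'.TailFirst Y).card
        + (Finset.univ.filter fun Y : Fin n =>
            D'.Interlocked Y c ∧ D'.TailFirst Y ∧ ¬ D'.TailFirst c).card := by
    convert card_split' c (fun a b' => D'.Interlocked a b' ∧ D'.TailFirst a ∧ ¬ D'.TailFirst b')
      (fun h => hIcc D' c h.1) using 2 <;> congr!
  have sDown : (Finset.univ.filter fun p : Fin n × Fin n =>
      D.Interlocked p.1 p.2 ∧ ¬ D.TailFirst p.1 ∧ D.TailFirst p.2).card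
      = (Finset.univ.filter fun p : Fin n × Fin n =>
          (D.Interlocked p.1 p.2 ∧ ¬ D.TailFirst p.1 ∧ D.TailFirst p.2) ∧ p.1 ≠ c ∧ p.2 ≠ c).card
        + (Finset.univ.filter fun Y : Fin n =>
            D.Interlocked c Y ∧ ¬ D.TailFirst c ∧ D.TailFirst Y).card
        + (Finset.univ.filter fun Y : Fin n =>
            D.Interlocked Y c ∧ ¬ D.TailFirst Y ∧ D.TailFirst c).card := by
    convert card_split' c (fun a b' => D.Interlocked a b' ∧ ¬ D.TailFirst a ∧ D.TailFirst b')
      (fun h => hIcc D c h.1) using 2 <;> congr!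
  have sDown' : (Finset.univ.filter fun p : Fin n × Fin n =>
      D'.Interlocked p.1 p.2 ∧ ¬ D'.TailFirst p.1 ∧ D'.TailFirst p.2).card
      = (Finset.univ.filter fun p : Fin n × Fin n =>
          (D'.Interlocked p.1 p.2 ∧ ¬ D'.TailFirst p.1 ∧ D'.TailFirst p.2) ∧ p.1 ≠ c ∧ p.2 ≠ c).card
        + (Finset.univ.filter fun Y : Fin n =>
            D'.Interlocked c Y ∧ ¬ D'.TailFirst c ∧ D'.TailFirst Y).card
        + (Finset.univ.filter fun Y : Fin n =>
            D'.Interlocked Y c ∧ ¬ D'.TailFirst Y ∧ D'.TailFirst c).card := by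
    convert card_split' c (fun a b' => D'.Interlocked a b' ∧ ¬ D'.TailFirst a ∧ D'.TailFirst b')
      (fun h => hIcc D' c h.1) using 2 <;> congr!
  have sLeft : (Finset.univ.filter fun p : Fin n × Fin n =>
      D.Interlocked p.1 p.2 ∧ D.TailFirst p.1 ∧ D.TailFirst p.2).card
      = (Finset.univ.filter fun p : Fin n × Fin n =>
          (D.Interlocked p.1 p.2 ∧ D.TailFirst p.1 ∧ D.TailFirst p.2) ∧ p.1 ≠ c ∧ p.2 ≠ c).card
        + (Finset.univ.filter fun Y : Fin n =>
            D.Interlocked c Y ∧ D.TailFirst c ∧ D.TailFirst Y).card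
        + (Finset.univ.filter fun Y : Fin n =>
            D.Interlocked Y c ∧ D.TailFirst Y ∧ D.TailFirst c).card := by
    convert card_split' c (fun a b' => D.Interlocked a b' ∧ D.TailFirst a ∧ D.TailFirst b')
      (fun h => hIcc D c h.1) using 2 <;> congr!
  have sLeft' : (Finset.univ.filter fun p : Fin n × Fin n =>
      D'.Interlocked p.1 p.2 ∧ D'.TailFirst p.1 ∧ D'.TailFirst p.2).card
      = (Finset.univ.filter fun p : Fin n × Fin n =>
          (D'.Interlocked p.1 p.2 ∧ D'.TailFirst p.1 ∧ D'.TailFirst p.2) ∧ p.1 ≠ c ∧ p.2 ≠ c).card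
        + (Finset.univ.filter fun Y : Fin n =>
            D'.Interlocked c Y ∧ D'.TailFirst c ∧ D'.TailFirst Y).card
        + (Finset.univ.filter fun Y : Fin n =>
            D'.Interlocked Y c ∧ D'.TailFirst Y ∧ D'.TailFirst c).card := by
    convert card_split' c (fun a b' => D'.Interlocked a b' ∧ D'.TailFirst a ∧ D'.TailFirst b')
      (fun h => hIcc D' c h.1) using 2 <;> congr!
  have sRight : (Finset.univ.filter fun p : Fin n × Fin n =>
      D.Interlocked p.1 p.2 ∧ ¬ D.TailFirst p.1 ∧ ¬ D.TailFirst p.2).card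
      = (Finset.univ.filter fun p : Fin n × Fin n =>
          (D.Interlocked p.1 p.2 ∧ ¬ D.TailFirst p.1 ∧ ¬ D.TailFirst p.2) ∧ p.1 ≠ c ∧ p.2 ≠ c).card
        + (Finset.univ.filter fun Y : Fin n =>
            D.Interlocked c Y ∧ ¬ D.TailFirst c ∧ ¬ D.TailFirst Y).card
        + (Finset.univ.filter fun Y : Fin n =>
            D.Interlocked Y c ∧ ¬ D.TailFirst Y ∧ ¬ D.TailFirst c).card := by
    convert card_split' c (fun a b' => D.Interlocked a b' ∧ ¬ D.TailFirst a ∧ ¬ D.TailFirst b')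
      (fun h => hIcc D c h.1) using 2 <;> congr!
  have sRight' : (Finset.univ.filter fun p : Fin n × Fin n =>
      D'.Interlocked p.1 p.2 ∧ ¬ D'.TailFirst p.1 ∧ ¬ D'.TailFirst p.2).card
      = (Finset.univ.filter fun p : Fin n × Fin n =>
          (D'.Interlocked p.1 p.2 ∧ ¬ D'.TailFirst p.1 ∧ ¬ D'.TailFirst p.2) ∧ p.1 ≠ c ∧ p.2 ≠ c).card
        + (Finset.univ.filter fun Y : Fin n =>
            D'.Interlocked c Y ∧ ¬ D'.TailFirst c ∧ ¬ D'.TailFirst Y).card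
        + (Finset.univ.filter fun Y : Fin n =>
            D'.Interlocked Y c ∧ ¬ D'.TailFirst Y ∧ ¬ D'.TailFirst c).card := by
    convert card_split' c (fun a b' => D'.Interlocked a b' ∧ ¬ D'.TailFirst a ∧ ¬ D'.TailFirst b')
      (fun h => hIcc D' c h.1) using 2 <;> congr!
  -- the "away from c" parts agree
  have hAup : (Finset.univ.filter fun p : Fin n × Fin n =>
        (D'.Interlocked p.1 p.2 ∧ D'.TailFirst p.1 ∧ ¬ D'.TailFirst p.2) ∧ p.1 ≠ c ∧ p.2 ≠ c).card
      = (Finset.univ.filter fun p : Fin n × Fin n =>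
        (D.Interlocked p.1 p.2 ∧ D.TailFirst p.1 ∧ ¬ D.TailFirst p.2) ∧ p.1 ≠ c ∧ p.2 ≠ c).card := by
    congr 1
    ext p
    simp only [Finset.mem_filter, Finset.mem_univ, true_and]
    constructor
    · rintro ⟨⟨h1, h2, h3⟩, h4, h5⟩
      exact ⟨⟨(hInt _ _ h4 h5).mp h1, (hTF _ h4).mp h2, fun hh => h3 ((hTF _ h5).mpr hh)⟩, h4, h5⟩
    · rintro ⟨⟨h1, h2, h3⟩, h4, h5⟩
      exact ⟨⟨(hInt _ _ h4 h5).mpr h1, (hTF _ h4).mpr h2, fun hh => h3 ((hTF _ h5).mp hh)⟩, h4, h5⟩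
  have hAdown : (Finset.univ.filter fun p : Fin n × Fin n =>
        (D'.Interlocked p.1 p.2 ∧ ¬ D'.TailFirst p.1 ∧ D'.TailFirst p.2) ∧ p.1 ≠ c ∧ p.2 ≠ c).card
      = (Finset.univ.filter fun p : Fin n × Fin n =>
        (D.Interlocked p.1 p.2 ∧ ¬ D.TailFirst p.1 ∧ D.TailFirst p.2) ∧ p.1 ≠ c ∧ p.2 ≠ c).card := by
    congr 1
    ext p
    simp only [Finset.mem_filter, Finset.mem_univ, true_and]
    constructor
    · rintro ⟨⟨h1, h2, h3⟩, h4, h5⟩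
      exact ⟨⟨(hInt _ _ h4 h5).mp h1, fun hh => h2 ((hTF _ h4).mpr hh), (hTF _ h5).mp h3⟩, h4, h5⟩
    · rintro ⟨⟨h1, h2, h3⟩, h4, h5⟩
      exact ⟨⟨(hInt _ _ h4 h5).mpr h1, fun hh => h2 ((hTF _ h4).mp hh), (hTF _ h5).mpr h3⟩, h4, h5⟩
  have hAleft : (Finset.univ.filter fun p : Fin n × Fin n =>
        (D'.Interlocked p.1 p.2 ∧ D'.TailFirst p.1 ∧ D'.TailFirst p.2) ∧ p.1 ≠ c ∧ p.2 ≠ c).card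
      = (Finset.univ.filter fun p : Fin n × Fin n =>
        (D.Interlocked p.1 p.2 ∧ D.TailFirst p.1 ∧ D.TailFirst p.2) ∧ p.1 ≠ c ∧ p.2 ≠ c).card := by
    congr 1
    ext p
    simp only [Finset.mem_filter, Finset.mem_univ, true_and]
    constructor
    · rintro ⟨⟨h1, h2, h3⟩, h4, h5⟩
      exact ⟨⟨(hInt _ _ h4 h5).mp h1, (hTF _ h4).mp h2, (hTF _ h5).mp h3⟩, h4, h5⟩
    · rintro ⟨⟨h1, h2, h3⟩, h4, h5⟩
      exact ⟨⟨(hInt _ _ h4 h5).mpr h1, (hTF _ h4).mpr h2, (hTF _ h5).mpr h3⟩, h4, h5⟩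
  have hAright : (Finset.univ.filter fun p : Fin n × Fin n =>
        (D'.Interlocked p.1 p.2 ∧ ¬ D'.TailFirst p.1 ∧ ¬ D'.TailFirst p.2) ∧ p.1 ≠ c ∧ p.2 ≠ c).card
      = (Finset.univ.filter fun p : Fin n × Fin n =>
        (D.Interlocked p.1 p.2 ∧ ¬ D.TailFirst p.1 ∧ ¬ D.TailFirst p.2) ∧ p.1 ≠ c ∧ p.2 ≠ c).card := by
    congr 1
    ext p
    simp only [Finset.mem_filter, Finset.mem_univ, true_and]
    constructor
    · rintro ⟨⟨h1, h2, h3⟩, h4, h5⟩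
      exact ⟨⟨(hInt _ _ h4 h5).mp h1, fun hh => h2 ((hTF _ h4).mpr hh),
        fun hh => h3 ((hTF _ h5).mpr hh)⟩, h4, h5⟩
    · rintro ⟨⟨h1, h2, h3⟩, h4, h5⟩
      exact ⟨⟨(hInt _ _ h4 h5).mpr h1, fun hh => h2 ((hTF _ h4).mp hh),
        fun hh => h3 ((hTF _ h5).mp hh)⟩, h4, h5⟩
  -- the (Y, c) parts for D are empty
  have hcDup : (Finset.univ.filter fun Y : Fin n =>
      D.Interlocked Y c ∧ D.TailFirst Y ∧ ¬ D.TailFirst c).card = 0 :=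
    by apply hzeroset; exact fun Y h => hnotYc Y h.1
  have hcDdown : (Finset.univ.filter fun Y : Fin n =>
      D.Interlocked Y c ∧ ¬ D.TailFirst Y ∧ D.TailFirst c).card = 0 :=
    by apply hzeroset; exact fun Y h => hnotYc Y h.1
  have hcDleft : (Finset.univ.filter fun Y : Fin n =>
      D.Interlocked Y c ∧ D.TailFirst Y ∧ D.TailFirst c).card = 0 :=
    by apply hzeroset; exact fun Y h => hnotYc Y h.1
  have hcDright : (Finset.univ.filter fun Y : Fin n =>
      D.Interlocked Y c ∧ ¬ D.TailFirst Y ∧ ¬ D.TailFirst c).card = 0 :=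
    by apply hzeroset; exact fun Y h => hnotYc Y h.1
  -- the (c, Y) parts for D' are empty
  have hbD'up : (Finset.univ.filter fun Y : Fin n =>
      D'.Interlocked c Y ∧ D'.TailFirst c ∧ ¬ D'.TailFirst Y).card = 0 :=
    by apply hzeroset; exact fun Y h => hnotcY' Y h.1
  have hbD'down : (Finset.univ.filter fun Y : Fin n =>
      D'.Interlocked c Y ∧ ¬ D'.TailFirst c ∧ D'.TailFirst Y).card = 0 :=
    by apply hzeroset; exact fun Y h => hnotcY' Y h.1
  have hbD'left : (Finset.univ.filter fun Y : Fin n =>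
      D'.Interlocked c Y ∧ D'.TailFirst c ∧ D'.TailFirst Y).card = 0 :=
    by apply hzeroset; exact fun Y h => hnotcY' Y h.1
  have hbD'right : (Finset.univ.filter fun Y : Fin n =>
      D'.Interlocked c Y ∧ ¬ D'.TailFirst c ∧ ¬ D'.TailFirst Y).card = 0 :=
    by apply hzeroset; exact fun Y h => hnotcY' Y h.1
  by_cases tc : D.TailFirst c
  · -- the tail of c sits at the base point
    have tfc' : ¬ D'.TailFirst c := fun h => (hTFc.mp h) tc
    have bUp : (Finset.univ.filter fun Y : Fin n =>
        D.Interlocked c Y ∧ D.TailFirst c ∧ ¬ D.TailFirst Y).card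
        = (Finset.univ.filter fun Y : Fin n => D.CrossesRL c Y).card := by
      congr 1
      ext Y
      simp only [Finset.mem_filter, Finset.mem_univ, true_and]
      rw [hXRL Y]
      constructor
      · rintro ⟨h1, -, h3⟩; exact ⟨h1, h3⟩
      · rintro ⟨h1, h3⟩; exact ⟨h1, tc, h3⟩
    have bLeft : (Finset.univ.filter fun Y : Fin n =>
        D.Interlocked c Y ∧ D.TailFirst c ∧ D.TailFirst Y).card
        = (Finset.univ.filter fun Y : Fin n => D.CrossesLR c Y).card := by
      congr 1
      ext Y
      simp only [Finset.mem_filter, Finset.mem_univ, true_and]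
      rw [hXLR Y]
      constructor
      · rintro ⟨h1, -, h3⟩; exact ⟨h1, h3⟩
      · rintro ⟨h1, h3⟩; exact ⟨h1, tc, h3⟩
    have bDown : (Finset.univ.filter fun Y : Fin n =>
        D.Interlocked c Y ∧ ¬ D.TailFirst c ∧ D.TailFirst Y).card = 0 :=
      by apply hzeroset; exact fun Y h => h.2.1 tc
    have bRight : (Finset.univ.filter fun Y : Fin n =>
        D.Interlocked c Y ∧ ¬ D.TailFirst c ∧ ¬ D.TailFirst Y).card = 0 :=
      by apply hzeroset; exact fun Y h => h.2.1 tc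
    have cUp' : (Finset.univ.filter fun Y : Fin n =>
        D'.Interlocked Y c ∧ D'.TailFirst Y ∧ ¬ D'.TailFirst c).card
        = (Finset.univ.filter fun Y : Fin n => D.CrossesLR c Y).card := by
      congr 1
      ext Y
      simp only [Finset.mem_filter, Finset.mem_univ, true_and]
      by_cases hY : Y = c
      · subst hY
        constructor
        · rintro ⟨h, -⟩; exact absurd h (hIcc D' _)
        · rintro ⟨h, -, -⟩; exact absurd rfl h
      · rw [hXLR Y]
        have e1 := hYc' Y hY
        have e2 := hTF Y hY
        constructor
        · rintro ⟨h1, h2, -⟩; exact ⟨e1.mp h1, e2.mp h2⟩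
        · rintro ⟨h1, h2⟩; exact ⟨e1.mpr h1, e2.mpr h2, tfc'⟩
    have cRight' : (Finset.univ.filter fun Y : Fin n =>
        D'.Interlocked Y c ∧ ¬ D'.TailFirst Y ∧ ¬ D'.TailFirst c).card
        = (Finset.univ.filter fun Y : Fin n => D.CrossesRL c Y).card := by
      congr 1
      ext Y
      simp only [Finset.mem_filter, Finset.mem_univ, true_and]
      by_cases hY : Y = c
      · subst hY
        constructor
        · rintro ⟨h, -⟩; exact absurd h (hIcc D' _)
        · rintro ⟨h, -, -⟩; exact absurd rfl h
      · rw [hXRL Y]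
        have e1 := hYc' Y hY
        have e2 := hTF Y hY
        constructor
        · rintro ⟨h1, h2, -⟩; exact ⟨e1.mp h1, fun hh => h2 (e2.mpr hh)⟩
        · rintro ⟨h1, h2⟩; exact ⟨e1.mpr h1, fun hh => h2 (e2.mp hh), tfc'⟩
    have cLeft' : (Finset.univ.filter fun Y : Fin n =>
        D'.Interlocked Y c ∧ D'.TailFirst Y ∧ D'.TailFirst c).card = 0 :=
      by apply hzeroset; exact fun Y h => tfc' h.2.2
    have cDown' : (Finset.univ.filter fun Y : Fin n =>
        D'.Interlocked Y c ∧ ¬ D'.TailFirst Y ∧ D'.TailFirst c).card = 0 :=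
      by apply hzeroset; exact fun Y h => tfc' h.2.2
    refine ⟨?_, ?_, ?_⟩
    · simp only [dUp]
      omega
    · simp only [dDown]
      omega
    · simp only [dLeft, dRight]
      omega
  · -- the head of c sits at the base point
    have tfc'' : D'.TailFirst c := hTFc.mpr tc
    have bUp : (Finset.univ.filter fun Y : Fin n =>
        D.Interlocked c Y ∧ D.TailFirst c ∧ ¬ D.TailFirst Y).card = 0 :=
      by apply hzeroset; exact fun Y h => tc h.2.1
    have bLeft : (Finset.univ.filter fun Y : Fin n =>
        D.Interlocked c Y ∧ D.TailFirst c ∧ D.TailFirst Y).card = 0 :=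
      by apply hzeroset; exact fun Y h => tc h.2.1
    have bDown : (Finset.univ.filter fun Y : Fin n =>
        D.Interlocked c Y ∧ ¬ D.TailFirst c ∧ D.TailFirst Y).card
        = (Finset.univ.filter fun Y : Fin n => D.CrossesLR c Y).card := by
      congr 1
      ext Y
      simp only [Finset.mem_filter, Finset.mem_univ, true_and]
      rw [hXLR Y]
      constructor
      · rintro ⟨h1, -, h3⟩; exact ⟨h1, h3⟩
      · rintro ⟨h1, h3⟩; exact ⟨h1, tc, h3⟩
    have bRight : (Finset.univ.filter fun Y : Fin n =>
        D.Interlocked c Y ∧ ¬ D.TailFirst c ∧ ¬ D.TailFirst Y).card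
        = (Finset.univ.filter fun Y : Fin n => D.CrossesRL c Y).card := by
      congr 1
      ext Y
      simp only [Finset.mem_filter, Finset.mem_univ, true_and]
      rw [hXRL Y]
      constructor
      · rintro ⟨h1, -, h3⟩; exact ⟨h1, h3⟩
      · rintro ⟨h1, h3⟩; exact ⟨h1, tc, h3⟩
    have cUp' : (Finset.univ.filter fun Y : Fin n =>
        D'.Interlocked Y c ∧ D'.TailFirst Y ∧ ¬ D'.TailFirst c).card = 0 :=
      by apply hzeroset; exact fun Y h => h.2.2 tfc''
    have cRight' : (Finset.univ.filter fun Y : Fin n =>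
        D'.Interlocked Y c ∧ ¬ D'.TailFirst Y ∧ ¬ D'.TailFirst c).card = 0 :=
      by apply hzeroset; exact fun Y h => h.2.2 tfc''
    have cLeft' : (Finset.univ.filter fun Y : Fin n =>
        D'.Interlocked Y c ∧ D'.TailFirst Y ∧ D'.TailFirst c).card
        = (Finset.univ.filter fun Y : Fin n => D.CrossesLR c Y).card := by
      congr 1
      ext Y
      simp only [Finset.mem_filter, Finset.mem_univ, true_and]
      by_cases hY : Y = c
      · subst hY
        constructor
        · rintro ⟨h, -⟩; exact absurd h (hIcc D' _)
        · rintro ⟨h, -, -⟩; exact absurd rfl h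
      · rw [hXLR Y]
        have e1 := hYc' Y hY
        have e2 := hTF Y hY
        constructor
        · rintro ⟨h1, h2, -⟩; exact ⟨e1.mp h1, e2.mp h2⟩
        · rintro ⟨h1, h2⟩; exact ⟨e1.mpr h1, e2.mpr h2, tfc''⟩
    have cDown' : (Finset.univ.filter fun Y : Fin n =>
        D'.Interlocked Y c ∧ ¬ D'.TailFirst Y ∧ D'.TailFirst c).card
        = (Finset.univ.filter fun Y : Fin n => D.CrossesRL c Y).card := by
      congr 1
      ext Y
      simp only [Finset.mem_filter, Finset.mem_univ, true_and]
      by_cases hY : Y = c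
      · subst hY
        constructor
        · rintro ⟨h, -⟩; exact absurd h (hIcc D' _)
        · rintro ⟨h, -, -⟩; exact absurd rfl h
      · rw [hXRL Y]
        have e1 := hYc' Y hY
        have e2 := hTF Y hY
        constructor
        · rintro ⟨h1, h2, -⟩; exact ⟨e1.mp h1, fun hh => h2 (e2.mpr hh)⟩
        · rintro ⟨h1, h2⟩; exact ⟨e1.mpr h1, fun hh => h2 (e2.mp hh), tfc''⟩
    refine ⟨?_, ?_, ?_⟩
    · simp only [dUp]
      omega
    · simp only [dDown]
      omega
    · simp only [dLeft, dRight]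
      omega
end

section
/- For a realizable based arrow diagram, moving the base point past the tail of an arrow A increases d→ by β and decreases d← by β, where β is the number of arrows forming a d↑ configuration with A, and leaves d↑ and d⊥ unchanged; moving it past the head of A increases d← by β' and decreases d→ by β', where β' is the number of arrows forming a d⊥ configuration with A, and leaves d↑ and d⊥ unchanged. -/
open scoped Classical

namespace ArrowDiagram

/-- Arrows forming a `d↑` configuration with `A` (in either order). -/
noncomputable def upWith {n : ℕ} (D : ArrowDiagram n) (A : Fin n) : ℕ :=
  (Finset.univ.filter (fun B : Fin n =>
    (D.Interlocked A B ∧ D.TailFirst A ∧ ¬ D.TailFirst B) ∨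
    (D.Interlocked B A ∧ D.TailFirst B ∧ ¬ D.TailFirst A))).card

/-- Arrows forming a `d⊥` configuration with `A` (in either order). -/
noncomputable def downWith {n : ℕ} (D : ArrowDiagram n) (A : Fin n) : ℕ :=
  (Finset.univ.filter (fun B : Fin n =>
    (D.Interlocked A B ∧ ¬ D.TailFirst A ∧ D.TailFirst B) ∨
    (D.Interlocked B A ∧ ¬ D.TailFirst B ∧ D.TailFirst A))).card

end ArrowDiagram

namespace ArrowDiagram

variable {n : ℕ}

lemma tail_ne_head' (D : ArrowDiagram n) (a b : Fin n) : D.tail a ≠ D.head b := by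
  intro h
  have := D.inj (a₁ := (a, false)) (a₂ := (b, true)) (by simpa using h)
  simp at this

lemma tail_inj' (D : ArrowDiagram n) {a b : Fin n} (h : D.tail a = D.tail b) : a = b := by
  have := D.inj (a₁ := (a, false)) (a₂ := (b, false)) (by simpa using h)
  simpa using this

lemma head_inj' (D : ArrowDiagram n) {a b : Fin n} (h : D.head a = D.head b) : a = b := by
  have := D.inj (a₁ := (a, true)) (a₂ := (b, true)) (by simpa using h)
  simpa using this

lemma interlocked_irrefl (D : ArrowDiagram n) (a : Fin n) : ¬ D.Interlocked a a :=
  fun h => lt_irrefl _ h.1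

lemma first_val (D : ArrowDiagram n) (a : Fin n) :
    (D.first a : ℕ) = min (D.tail a : ℕ) (D.head a : ℕ) :=
  Fin.val_strictMono.monotone.map_min

lemma second_val (D : ArrowDiagram n) (a : Fin n) :
    (D.second a : ℕ) = max (D.tail a : ℕ) (D.head a : ℕ) :=
  Fin.val_strictMono.monotone.map_max

lemma tf_iff (D : ArrowDiagram n) (a : Fin n) :
    D.TailFirst a ↔ (D.tail a : ℕ) < (D.head a : ℕ) := Iff.rfl

lemma interlocked_iff (D : ArrowDiagram n) (a b : Fin n) :
    D.Interlocked a b ↔ ((D.first a : ℕ) < (D.first b : ℕ) ∧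
      (D.first b : ℕ) < (D.second a : ℕ) ∧ (D.second a : ℕ) < (D.second b : ℕ)) := Iff.rfl

lemma inside_iff (D : ArrowDiagram n) (X : Fin n) (x : Fin (2*n)) :
    D.Inside X x ↔ ((D.first X : ℕ) < (x : ℕ) ∧ (x : ℕ) < (D.second X : ℕ)) := Iff.rfl

open Finset in
lemma row_card {α : Type*} [Fintype α] [DecidableEq α] (A : α) (Q : α × α → Prop) :
    (univ.filter fun p : α × α => Q p ∧ p.1 = A).card = (univ.filter fun B => Q (A, B)).card := by
  classical
  refine Finset.card_bij' (fun p _ => p.2) (fun B _ => (A, B)) ?_ ?_ ?_ ?_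
  · rintro ⟨x, y⟩ hp
    simp only [mem_filter, mem_univ, true_and] at hp ⊢
    obtain ⟨hQ, rfl⟩ := hp
    exact hQ
  · intro B hB
    exact mem_filter.mpr ⟨mem_univ _, (mem_filter.mp hB).2, rfl⟩
  · rintro ⟨x, y⟩ hp
    simp only [mem_filter, mem_univ, true_and] at hp
    obtain ⟨hQ, rfl⟩ := hp
    rfl
  · intro B hB
    rfl

open Finset in
lemma col_card {α : Type*} [Fintype α] [DecidableEq α] (A : α) (Q : α × α → Prop) :
    (univ.filter fun p : α × α => Q p ∧ p.2 = A).card = (univ.filter fun B => Q (B, A)).card := by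
  classical
  refine Finset.card_bij' (fun p _ => p.1) (fun B _ => (B, A)) ?_ ?_ ?_ ?_
  · rintro ⟨x, y⟩ hp
    simp only [mem_filter, mem_univ, true_and] at hp ⊢
    obtain ⟨hQ, rfl⟩ := hp
    exact hQ
  · intro B hB
    exact mem_filter.mpr ⟨mem_univ _, (mem_filter.mp hB).2, rfl⟩
  · rintro ⟨x, y⟩ hp
    simp only [mem_filter, mem_univ, true_and] at hp
    obtain ⟨hQ, rfl⟩ := hp
    rfl
  · intro B hB
    rfl

open Finset in
lemma split_card_aux {α : Type*} [Fintype α] [DecidableEq α] (A : α) (Q : α × α → Prop)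
    (hAA : ¬ Q (A, A)) :
    (univ.filter Q).card
      = (univ.filter (fun p => Q p ∧ p.1 ≠ A ∧ p.2 ≠ A)).card
        + ((univ.filter (fun B => Q (A, B))).card + (univ.filter (fun B => Q (B, A))).card) := by
  classical
  rw [← row_card A Q, ← col_card A Q]
  have hU : (univ.filter Q) =
      (univ.filter (fun p => Q p ∧ p.1 ≠ A ∧ p.2 ≠ A)) ∪
      ((univ.filter (fun p => Q p ∧ p.1 = A)) ∪ (univ.filter (fun p => Q p ∧ p.2 = A))) := by
    ext p
    simp only [mem_filter, mem_univ, true_and, mem_union]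
    constructor
    · intro hQ
      by_cases h1 : p.1 = A
      · exact Or.inr (Or.inl ⟨hQ, h1⟩)
      · by_cases h2 : p.2 = A
        · exact Or.inr (Or.inr ⟨hQ, h2⟩)
        · exact Or.inl ⟨hQ, h1, h2⟩
    · rintro (⟨h, -⟩ | ⟨h, -⟩ | ⟨h, -⟩) <;> exact h
  rw [hU, card_union_of_disjoint, card_union_of_disjoint]
  · rw [disjoint_left]
    rintro ⟨x, y⟩ h1 h2
    simp only [mem_filter, mem_univ, true_and] at h1 h2
    obtain ⟨hQ, rfl⟩ := h1
    obtain ⟨-, rfl⟩ := h2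
    exact hAA hQ
  · rw [disjoint_left]
    rintro ⟨x, y⟩ h1 h2
    simp only [mem_filter, mem_univ, true_and, mem_union] at h1 h2
    rcases h2 with ⟨-, h⟩ | ⟨-, h⟩
    · exact h1.2.1 h
    · exact h1.2.2 h


open Finset in
lemma fcc {α : Type*} [Fintype α] {p q : α → Prop} (hp : DecidablePred p) (hq : DecidablePred q)
    (h : ∀ a, p a ↔ q a) :
    (@Finset.filter α p hp Finset.univ).card = (@Finset.filter α q hq Finset.univ).card :=
  congrArg Finset.card (@Finset.filter_congr α p q hp hq Finset.univ fun a _ => h a)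

open Finset in
lemma split_card {α : Type*} [Fintype α] [DecidableEq α] (A : α) (Q : α → α → Prop)
    (hAA : ¬ Q A A) :
    (univ.filter (fun p : α × α => Q p.1 p.2)).card
      = (univ.filter (fun p : α × α => Q p.1 p.2 ∧ p.1 ≠ A ∧ p.2 ≠ A)).card
        + ((univ.filter (fun B => Q A B)).card + (univ.filter (fun B => Q B A)).card) := by
  classical
  have h := split_card_aux A (fun pp : α × α => Q pp.1 pp.2) hAA
  simpa using h

end ArrowDiagram

namespace ArrowDiagram

variable {n : ℕ}

/-- The diagram with all arrows reversed. -/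
noncomputable def swapD (D : ArrowDiagram n) : ArrowDiagram n where
  tail := D.head
  head := D.tail
  inj := by
    intro p q hpq
    have h : (fun r : Fin n × Bool => if r.2 then D.head r.1 else D.tail r.1) (p.1, !p.2)
        = (fun r : Fin n × Bool => if r.2 then D.head r.1 else D.tail r.1) (q.1, !q.2) := by
      rcases p with ⟨a, b⟩; rcases q with ⟨c, d⟩
      cases b <;> cases d <;> simpa using hpq
    have h2 := D.inj h
    rw [Prod.ext_iff] at h2
    exact Prod.ext h2.1 (Bool.not_inj h2.2)

@[simp] lemma swap_tail (D : ArrowDiagram n) : (swapD D).tail = D.head := rfl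
@[simp] lemma swap_head (D : ArrowDiagram n) : (swapD D).head = D.tail := rfl

lemma swap_first (D : ArrowDiagram n) (a : Fin n) : (swapD D).first a = D.first a :=
  min_comm _ _

lemma swap_second (D : ArrowDiagram n) (a : Fin n) : (swapD D).second a = D.second a :=
  max_comm _ _

lemma swap_interlocked (D : ArrowDiagram n) (a b : Fin n) :
    (swapD D).Interlocked a b ↔ D.Interlocked a b := by
  simp [Interlocked, swap_first, swap_second]

lemma swap_tf (D : ArrowDiagram n) (a : Fin n) :
    (swapD D).TailFirst a ↔ ¬ D.TailFirst a := by
  have hne : (D.tail a : ℕ) ≠ (D.head a : ℕ) :=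
    fun h => D.tail_ne_head' a a (Fin.val_injective h)
  rw [tf_iff, tf_iff]
  simp only [swap_tail, swap_head]
  omega

lemma swap_inside (D : ArrowDiagram n) (X : Fin n) (x : Fin (2 * n)) :
    (swapD D).Inside X x ↔ D.Inside X x := by
  simp [Inside, swap_first, swap_second]

lemma swap_lr (D : ArrowDiagram n) (X Y : Fin n) :
    (swapD D).CrossesLR X Y ↔ D.CrossesRL X Y := by
  simp [CrossesLR, CrossesRL, swap_inside]

lemma swap_rl (D : ArrowDiagram n) (X Y : Fin n) :
    (swapD D).CrossesRL X Y ↔ D.CrossesLR X Y := by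
  simp [CrossesLR, CrossesRL, swap_inside]

lemma swap_balanced {D : ArrowDiagram n} (h : D.Balanced) : (swapD D).Balanced := by
  intro X
  have h1 : (swapD D).lrCount X = D.rlCount X := by
    rw [lrCount, rlCount]; congr 1; exact Finset.filter_congr fun Y _ => swap_lr D X Y
  have h2 : (swapD D).rlCount X = D.lrCount X := by
    rw [lrCount, rlCount]; congr 1; exact Finset.filter_congr fun Y _ => swap_rl D X Y
  rw [h1, h2, h X]

lemma swap_shift {D D' : ArrowDiagram n} (h : D'.ShiftOf D) :
    (swapD D').ShiftOf (swapD D) := fun a => ⟨(h a).2, (h a).1⟩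

lemma swap_dUp (D : ArrowDiagram n) : (swapD D).dUp = D.dDown := by
  rw [dUp, dDown]; congr 1
  exact Finset.filter_congr fun p _ => by
    simp [swap_interlocked, swap_tf, not_not]

lemma swap_dDown (D : ArrowDiagram n) : (swapD D).dDown = D.dUp := by
  rw [dUp, dDown]; congr 1
  exact Finset.filter_congr fun p _ => by
    simp [swap_interlocked, swap_tf, not_not]

lemma swap_dLeft (D : ArrowDiagram n) : (swapD D).dLeft = D.dRight := by
  rw [dLeft, dRight]; congr 1
  exact Finset.filter_congr fun p _ => by
    simp [swap_interlocked, swap_tf, not_not]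

lemma swap_dRight (D : ArrowDiagram n) : (swapD D).dRight = D.dLeft := by
  rw [dLeft, dRight]; congr 1
  exact Finset.filter_congr fun p _ => by
    simp [swap_interlocked, swap_tf, not_not]

lemma swap_upWith (D : ArrowDiagram n) (A : Fin n) : (swapD D).upWith A = D.downWith A := by
  rw [upWith, downWith]; congr 1
  exact Finset.filter_congr fun B _ => by
    simp [swap_interlocked, swap_tf, not_not]

end ArrowDiagram

namespace ArrowDiagram

open Finset

lemma tail_case {n : ℕ} (D D' : ArrowDiagram n) (hreal : D.Balanced)
    (hshift : D'.ShiftOf D) (A : Fin n) (h0 : (D.tail A : ℕ) = 0) :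
    D'.dRight = D.dRight + D.upWith A ∧
    D'.dLeft + D.upWith A = D.dLeft ∧
    D'.dUp = D.dUp ∧ D'.dDown = D.dDown := by
  classical
  have hn : 0 < n := A.pos
  -- distinctness in ℕ values
  have hth : ∀ a b : Fin n, (D.tail a : ℕ) ≠ (D.head b : ℕ) :=
    fun a b h => D.tail_ne_head' a b (Fin.val_injective h)
  have htt : ∀ a b : Fin n, a ≠ b → (D.tail a : ℕ) ≠ (D.tail b : ℕ) :=
    fun a b hab h => hab (D.tail_inj' (Fin.val_injective h))
  have hhh : ∀ a b : Fin n, a ≠ b → (D.head a : ℕ) ≠ (D.head b : ℕ) :=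
    fun a b hab h => hab (D.head_inj' (Fin.val_injective h))
  set p := (D.head A : ℕ) with hp
  have hpA : 1 ≤ p := by have := hth A A; omega
  have hplt : p < 2 * n := (D.head A).isLt
  have htB : ∀ B : Fin n, B ≠ A → 1 ≤ (D.tail B : ℕ) := by
    intro B hB; have := htt B A hB; omega
  have hhB : ∀ B : Fin n, 1 ≤ (D.head B : ℕ) := by
    intro B; have := hth A B; omega
  -- shifted values
  have hsv : ∀ v w : Fin (2 * n), (w : ℕ) = ((v : ℕ) + (2 * n - 1)) % (2 * n) →
      1 ≤ (v : ℕ) → (w : ℕ) = (v : ℕ) - 1 := by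
    intro v w hw hv
    have hvlt := v.isLt
    rw [hw, show (v : ℕ) + (2 * n - 1) = ((v : ℕ) - 1) + 2 * n by omega,
      Nat.add_mod_right, Nat.mod_eq_of_lt (by omega)]
  have ht' : ∀ B : Fin n, B ≠ A → (D'.tail B : ℕ) = (D.tail B : ℕ) - 1 :=
    fun B hB => hsv _ _ (hshift B).1 (htB B hB)
  have hh' : ∀ B : Fin n, (D'.head B : ℕ) = (D.head B : ℕ) - 1 :=
    fun B => hsv _ _ (hshift B).2 (hhB B)
  have htA' : (D'.tail A : ℕ) = 2 * n - 1 := by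
    have h := (hshift A).1
    rw [h, h0, Nat.zero_add, Nat.mod_eq_of_lt (by omega)]
  -- TailFirst facts
  have hTFA : D.TailFirst A := by rw [tf_iff]; omega
  have hTFA' : ¬ D'.TailFirst A := by
    rw [tf_iff]; rw [htA', hh' A]; omega
  have hTF' : ∀ B : Fin n, B ≠ A → (D'.TailFirst B ↔ D.TailFirst B) := by
    intro B hB
    rw [tf_iff, tf_iff, ht' B hB, hh' B]
    have := htB B hB; have := hhB B; omega
  -- first/second values
  have hfstpos : ∀ B : Fin n, B ≠ A → 1 ≤ (D.first B : ℕ) := by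
    intro B hB; rw [first_val]; have := htB B hB; have := hhB B; omega
  have hfs : ∀ B : Fin n, (D.first B : ℕ) ≤ (D.second B : ℕ) := by
    intro B; rw [first_val, second_val]; omega
  have hsndlt : ∀ B : Fin n, (D.second B : ℕ) < 2 * n := by
    intro B; rw [second_val]
    have := (D.tail B).isLt; have := (D.head B).isLt; omega
  have hfst' : ∀ B : Fin n, B ≠ A → (D'.first B : ℕ) = (D.first B : ℕ) - 1 := by
    intro B hB
    rw [first_val, first_val, ht' B hB, hh' B]
    have := htB B hB; have := hhB B; omega
  have hsnd' : ∀ B : Fin n, B ≠ A → (D'.second B : ℕ) = (D.second B : ℕ) - 1 := by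
    intro B hB
    rw [second_val, second_val, ht' B hB, hh' B]
    have := htB B hB; have := hhB B; omega
  have hfA : (D.first A : ℕ) = 0 := by rw [first_val]; omega
  have hsA : (D.second A : ℕ) = p := by rw [second_val]; omega
  have hfA' : (D'.first A : ℕ) = p - 1 := by
    rw [first_val, htA', hh' A]; omega
  have hsA' : (D'.second A : ℕ) = 2 * n - 1 := by
    rw [second_val, htA', hh' A]; omega
  -- preservation of interlocking away from A
  have hpres : ∀ B C : Fin n, B ≠ A → C ≠ A → (D'.Interlocked B C ↔ D.Interlocked B C) := by
    intro B C hB hC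
    rw [interlocked_iff, interlocked_iff, hfst' B hB, hfst' C hC, hsnd' B hB, hsnd' C hC]
    have := hfstpos B hB; have := hfstpos C hC
    have := hfs B; have := hfs C
    omega
  -- characterization of interlocking with A
  have hIA : ∀ B : Fin n, D.Interlocked A B ↔
      (B ≠ A ∧ (D.first B : ℕ) < p ∧ p < (D.second B : ℕ)) := by
    intro B
    by_cases hB : B = A
    · subst hB; exact iff_of_false (interlocked_irrefl D B) (by simp)
    · rw [interlocked_iff, hfA, hsA]
      have := hfstpos B hB
      constructor
      · intro h; exact ⟨hB, by omega, by omega⟩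
      · rintro ⟨-, h1, h2⟩; exact ⟨by omega, h1, h2⟩
  have hIA2 : ∀ B : Fin n, ¬ D.Interlocked B A := by
    intro B h
    rw [interlocked_iff, hfA] at h
    omega
  have hIA' : ∀ B : Fin n, ¬ D'.Interlocked A B := by
    intro B h
    rw [interlocked_iff, hsA'] at h
    have := (D'.second B).isLt; omega
  have hIA2' : ∀ B : Fin n, D'.Interlocked B A ↔
      (B ≠ A ∧ (D.first B : ℕ) < p ∧ p < (D.second B : ℕ)) := by
    intro B
    by_cases hB : B = A
    · subst hB; exact iff_of_false (interlocked_irrefl D' B) (by simp)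
    · rw [interlocked_iff, hfA', hsA', hfst' B hB, hsnd' B hB]
      have := hfstpos B hB; have := hfs B; have := hsndlt B
      constructor
      · rintro ⟨h1, h2, h3⟩; exact ⟨hB, by omega, by omega⟩
      · rintro ⟨-, h1, h2⟩; exact ⟨by omega, by omega, by omega⟩
  -- the two halves of the interlocking set
  set SL := univ.filter (fun B : Fin n =>
      (B ≠ A ∧ (D.first B : ℕ) < p ∧ p < (D.second B : ℕ)) ∧ D.TailFirst B) with hSL
  set SR := univ.filter (fun B : Fin n =>
      (B ≠ A ∧ (D.first B : ℕ) < p ∧ p < (D.second B : ℕ)) ∧ ¬ D.TailFirst B) with hSR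
  -- the balance condition: |SL| = |SR|
  have hbal : SL.card = SR.card := by
    have h1 : univ.filter (fun Y => D.CrossesLR A Y) = SL := by
      rw [hSL]
      apply Finset.filter_congr
      intro Y _
      by_cases hY : Y = A
      · subst hY
        simp [CrossesLR]
      · have ht1 := htB Y hY; have hh1 := hhB Y
        have hh2 := hhh Y A hY
        have ht2 := hth Y A
        constructor
        · rintro ⟨-, h2, h3⟩
          rw [inside_iff, hfA, hsA] at h2
          rw [inside_iff, hfA, hsA] at h3
          have h4 : p < (D.head Y : ℕ) := by omega
          have h5 : (D.tail Y : ℕ) < (D.head Y : ℕ) := by omega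
          refine ⟨⟨hY, ?_, ?_⟩, by rw [tf_iff]; omega⟩
          · rw [first_val]; omega
          · rw [second_val]; omega
        · rintro ⟨⟨-, h2, h3⟩, h5⟩
          rw [first_val] at h2; rw [second_val] at h3
          rw [tf_iff] at h5
          refine ⟨hY, ?_, ?_⟩
          · rw [inside_iff, hfA, hsA]; omega
          · rw [inside_iff, hfA, hsA]; omega
    have h2 : univ.filter (fun Y => D.CrossesRL A Y) = SR := by
      rw [hSR]
      apply Finset.filter_congr
      intro Y _
      by_cases hY : Y = A
      · subst hY
        simp [CrossesRL]
      · have ht1 := htB Y hY; have hh1 := hhB Y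
        have ht2 := htt Y A hY
        have ht3 := hth Y A
        constructor
        · rintro ⟨-, h2, h3⟩
          rw [inside_iff, hfA, hsA] at h2
          rw [inside_iff, hfA, hsA] at h3
          have h4 : p < (D.tail Y : ℕ) := by omega
          have h5 : ¬ (D.tail Y : ℕ) < (D.head Y : ℕ) := by omega
          refine ⟨⟨hY, ?_, ?_⟩, by rw [tf_iff]; omega⟩
          · rw [first_val]; omega
          · rw [second_val]; omega
        · rintro ⟨⟨-, h2, h3⟩, h5⟩
          rw [first_val] at h2; rw [second_val] at h3
          rw [tf_iff] at h5
          refine ⟨hY, ?_, ?_⟩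
          · rw [inside_iff, hfA, hsA]; omega
          · rw [inside_iff, hfA, hsA]; omega
    have h3 := hreal A
    rw [lrCount, rlCount, h1, h2] at h3
    exact h3
  -- upWith A = |SR|
  have hup : D.upWith A = SR.card := by
    rw [upWith, hSR]
    congr 1
    apply Finset.filter_congr
    intro B _
    rw [hIA B]
    have h1 := hIA2 B
    have h2 := hTFA
    tauto
  -- row and column counts, diagram D
  have hrU : (univ.filter (fun B : Fin n =>
      D.Interlocked A B ∧ D.TailFirst A ∧ ¬ D.TailFirst B)).card = SR.card := by
    rw [hSR]; congr 1
    apply Finset.filter_congr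
    intro B _
    rw [hIA B]
    have h2 := hTFA
    tauto
  have hrL : (univ.filter (fun B : Fin n =>
      D.Interlocked A B ∧ D.TailFirst A ∧ D.TailFirst B)).card = SL.card := by
    rw [hSL]; congr 1
    apply Finset.filter_congr
    intro B _
    rw [hIA B]
    have h2 := hTFA
    tauto
  have hrR : (univ.filter (fun B : Fin n =>
      D.Interlocked A B ∧ ¬ D.TailFirst A ∧ ¬ D.TailFirst B)).card = 0 := by
    rw [Finset.card_eq_zero, Finset.filter_eq_empty_iff]
    intro B _
    simp [hTFA]
  have hrD : (univ.filter (fun B : Fin n =>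
      D.Interlocked A B ∧ ¬ D.TailFirst A ∧ D.TailFirst B)).card = 0 := by
    rw [Finset.card_eq_zero, Finset.filter_eq_empty_iff]
    intro B _
    simp [hTFA]
  have hcol : ∀ P : Fin n → Prop, (univ.filter (fun B : Fin n =>
      D.Interlocked B A ∧ P B)).card = 0 := by
    intro P
    rw [Finset.card_eq_zero, Finset.filter_eq_empty_iff]
    intro B _
    simp [hIA2 B]
  -- row and column counts, diagram D'
  have hrow' : ∀ P : Fin n → Prop, (univ.filter (fun B : Fin n =>
      D'.Interlocked A B ∧ P B)).card = 0 := by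
    intro P
    rw [Finset.card_eq_zero, Finset.filter_eq_empty_iff]
    intro B _
    simp [hIA' B]
  have hcU : (univ.filter (fun B : Fin n =>
      D'.Interlocked B A ∧ D'.TailFirst B ∧ ¬ D'.TailFirst A)).card = SL.card := by
    rw [hSL]; congr 1
    apply Finset.filter_congr
    intro B _
    rw [hIA2' B]
    constructor
    · rintro ⟨h1, h2, -⟩
      exact ⟨h1, (hTF' B h1.1).mp h2⟩
    · rintro ⟨h1, h2⟩
      exact ⟨h1, (hTF' B h1.1).mpr h2, hTFA'⟩
  have hcR : (univ.filter (fun B : Fin n =>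
      D'.Interlocked B A ∧ ¬ D'.TailFirst B ∧ ¬ D'.TailFirst A)).card = SR.card := by
    rw [hSR]; congr 1
    apply Finset.filter_congr
    intro B _
    rw [hIA2' B]
    constructor
    · rintro ⟨h1, h2, -⟩
      exact ⟨h1, fun h => h2 ((hTF' B h1.1).mpr h)⟩
    · rintro ⟨h1, h2⟩
      exact ⟨h1, fun h => h2 ((hTF' B h1.1).mp h), hTFA'⟩
  have hcL : (univ.filter (fun B : Fin n =>
      D'.Interlocked B A ∧ D'.TailFirst B ∧ D'.TailFirst A)).card = 0 := by
    rw [Finset.card_eq_zero, Finset.filter_eq_empty_iff]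
    intro B _
    simp [hTFA']
  have hcD : (univ.filter (fun B : Fin n =>
      D'.Interlocked B A ∧ ¬ D'.TailFirst B ∧ D'.TailFirst A)).card = 0 := by
    rw [Finset.card_eq_zero, Finset.filter_eq_empty_iff]
    intro B _
    simp [hTFA']
  -- D-column counts vanish
  have cU0 : (univ.filter (fun B : Fin n =>
      D.Interlocked B A ∧ D.TailFirst B ∧ ¬ D.TailFirst A)).card = 0 := by
    rw [Finset.card_eq_zero, Finset.filter_eq_empty_iff]
    exact fun B _ hh => hIA2 B hh.1
  have cL0 : (univ.filter (fun B : Fin n =>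
      D.Interlocked B A ∧ D.TailFirst B ∧ D.TailFirst A)).card = 0 := by
    rw [Finset.card_eq_zero, Finset.filter_eq_empty_iff]
    exact fun B _ hh => hIA2 B hh.1
  have cR0 : (univ.filter (fun B : Fin n =>
      D.Interlocked B A ∧ ¬ D.TailFirst B ∧ ¬ D.TailFirst A)).card = 0 := by
    rw [Finset.card_eq_zero, Finset.filter_eq_empty_iff]
    exact fun B _ hh => hIA2 B hh.1
  have cD0 : (univ.filter (fun B : Fin n =>
      D.Interlocked B A ∧ ¬ D.TailFirst B ∧ D.TailFirst A)).card = 0 := by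
    rw [Finset.card_eq_zero, Finset.filter_eq_empty_iff]
    exact fun B _ hh => hIA2 B hh.1
  -- D'-row counts vanish
  have rU0' : (univ.filter (fun B : Fin n =>
      D'.Interlocked A B ∧ D'.TailFirst A ∧ ¬ D'.TailFirst B)).card = 0 := by
    rw [Finset.card_eq_zero, Finset.filter_eq_empty_iff]
    exact fun B _ hh => hIA' B hh.1
  have rL0' : (univ.filter (fun B : Fin n =>
      D'.Interlocked A B ∧ D'.TailFirst A ∧ D'.TailFirst B)).card = 0 := by
    rw [Finset.card_eq_zero, Finset.filter_eq_empty_iff]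
    exact fun B _ hh => hIA' B hh.1
  have rR0' : (univ.filter (fun B : Fin n =>
      D'.Interlocked A B ∧ ¬ D'.TailFirst A ∧ ¬ D'.TailFirst B)).card = 0 := by
    rw [Finset.card_eq_zero, Finset.filter_eq_empty_iff]
    exact fun B _ hh => hIA' B hh.1
  have rD0' : (univ.filter (fun B : Fin n =>
      D'.Interlocked A B ∧ ¬ D'.TailFirst A ∧ D'.TailFirst B)).card = 0 := by
    rw [Finset.card_eq_zero, Finset.filter_eq_empty_iff]
    exact fun B _ hh => hIA' B hh.1
  -- the "neither A" parts agree
  have hne1 : ∀ B C : Fin n, B ≠ A → C ≠ A →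
      ((D'.Interlocked B C ↔ D.Interlocked B C) ∧ (D'.TailFirst B ↔ D.TailFirst B) ∧
        (D'.TailFirst C ↔ D.TailFirst C)) :=
    fun B C hB hC => ⟨hpres B C hB hC, hTF' B hB, hTF' C hC⟩
  have nU : (univ.filter (fun q : Fin n × Fin n =>
      (D'.Interlocked q.1 q.2 ∧ D'.TailFirst q.1 ∧ ¬ D'.TailFirst q.2) ∧ q.1 ≠ A ∧ q.2 ≠ A)).card
      = (univ.filter (fun q : Fin n × Fin n =>
      (D.Interlocked q.1 q.2 ∧ D.TailFirst q.1 ∧ ¬ D.TailFirst q.2) ∧ q.1 ≠ A ∧ q.2 ≠ A)).card := by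
    congr 1
    apply Finset.filter_congr
    rintro ⟨B, C⟩ _
    simp only
    by_cases hB : B = A
    · simp [hB]
    · by_cases hC : C = A
      · simp [hC]
      · obtain ⟨i1, i2, i3⟩ := hne1 B C hB hC
        constructor
        · rintro ⟨⟨a1, a2, a3⟩, hB', hC'⟩
          exact ⟨⟨i1.mp a1, i2.mp a2, fun h => a3 (i3.mpr h)⟩, hB', hC'⟩
        · rintro ⟨⟨a1, a2, a3⟩, hB', hC'⟩
          exact ⟨⟨i1.mpr a1, i2.mpr a2, fun h => a3 (i3.mp h)⟩, hB', hC'⟩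
  have nL : (univ.filter (fun q : Fin n × Fin n =>
      (D'.Interlocked q.1 q.2 ∧ D'.TailFirst q.1 ∧ D'.TailFirst q.2) ∧ q.1 ≠ A ∧ q.2 ≠ A)).card
      = (univ.filter (fun q : Fin n × Fin n =>
      (D.Interlocked q.1 q.2 ∧ D.TailFirst q.1 ∧ D.TailFirst q.2) ∧ q.1 ≠ A ∧ q.2 ≠ A)).card := by
    congr 1
    apply Finset.filter_congr
    rintro ⟨B, C⟩ _
    simp only
    by_cases hB : B = A
    · simp [hB]
    · by_cases hC : C = A
      · simp [hC]
      · obtain ⟨i1, i2, i3⟩ := hne1 B C hB hC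
        constructor
        · rintro ⟨⟨a1, a2, a3⟩, hB', hC'⟩
          exact ⟨⟨i1.mp a1, i2.mp a2, i3.mp a3⟩, hB', hC'⟩
        · rintro ⟨⟨a1, a2, a3⟩, hB', hC'⟩
          exact ⟨⟨i1.mpr a1, i2.mpr a2, i3.mpr a3⟩, hB', hC'⟩
  have nR : (univ.filter (fun q : Fin n × Fin n =>
      (D'.Interlocked q.1 q.2 ∧ ¬ D'.TailFirst q.1 ∧ ¬ D'.TailFirst q.2) ∧ q.1 ≠ A ∧ q.2 ≠ A)).card
      = (univ.filter (fun q : Fin n × Fin n =>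
      (D.Interlocked q.1 q.2 ∧ ¬ D.TailFirst q.1 ∧ ¬ D.TailFirst q.2) ∧ q.1 ≠ A ∧ q.2 ≠ A)).card := by
    congr 1
    apply Finset.filter_congr
    rintro ⟨B, C⟩ _
    simp only
    by_cases hB : B = A
    · simp [hB]
    · by_cases hC : C = A
      · simp [hC]
      · obtain ⟨i1, i2, i3⟩ := hne1 B C hB hC
        constructor
        · rintro ⟨⟨a1, a2, a3⟩, hB', hC'⟩
          exact ⟨⟨i1.mp a1, fun h => a2 (i2.mpr h), fun h => a3 (i3.mpr h)⟩, hB', hC'⟩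
        · rintro ⟨⟨a1, a2, a3⟩, hB', hC'⟩
          exact ⟨⟨i1.mpr a1, fun h => a2 (i2.mp h), fun h => a3 (i3.mp h)⟩, hB', hC'⟩
  have nD : (univ.filter (fun q : Fin n × Fin n =>
      (D'.Interlocked q.1 q.2 ∧ ¬ D'.TailFirst q.1 ∧ D'.TailFirst q.2) ∧ q.1 ≠ A ∧ q.2 ≠ A)).card
      = (univ.filter (fun q : Fin n × Fin n =>
      (D.Interlocked q.1 q.2 ∧ ¬ D.TailFirst q.1 ∧ D.TailFirst q.2) ∧ q.1 ≠ A ∧ q.2 ≠ A)).card := by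
    congr 1
    apply Finset.filter_congr
    rintro ⟨B, C⟩ _
    simp only
    by_cases hB : B = A
    · simp [hB]
    · by_cases hC : C = A
      · simp [hC]
      · obtain ⟨i1, i2, i3⟩ := hne1 B C hB hC
        constructor
        · rintro ⟨⟨a1, a2, a3⟩, hB', hC'⟩
          exact ⟨⟨i1.mp a1, fun h => a2 (i2.mpr h), i3.mp a3⟩, hB', hC'⟩
        · rintro ⟨⟨a1, a2, a3⟩, hB', hC'⟩
          exact ⟨⟨i1.mpr a1, fun h => a2 (i2.mp h), i3.mpr a3⟩, hB', hC'⟩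
  -- decompositions of the eight counts
  have tU : D.dUp = (univ.filter (fun q : Fin n × Fin n =>
      (D.Interlocked q.1 q.2 ∧ D.TailFirst q.1 ∧ ¬ D.TailFirst q.2) ∧ q.1 ≠ A ∧ q.2 ≠ A)).card
      + ((univ.filter (fun B : Fin n =>
          D.Interlocked A B ∧ D.TailFirst A ∧ ¬ D.TailFirst B)).card
        + (univ.filter (fun B : Fin n =>
          D.Interlocked B A ∧ D.TailFirst B ∧ ¬ D.TailFirst A)).card) := by
    have h := split_card_aux A (fun q : Fin n × Fin n =>
        D.Interlocked q.1 q.2 ∧ D.TailFirst q.1 ∧ ¬ D.TailFirst q.2)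
      (fun hh => interlocked_irrefl D A hh.1)
    refine ((fcc _ _ fun q => Iff.rfl).trans h).trans ?_
    exact congrArg₂ (· + ·) (fcc _ _ fun q => Iff.rfl)
      (congrArg₂ (· + ·) (fcc _ _ fun B => Iff.rfl) (fcc _ _ fun B => Iff.rfl))
  have tL : D.dLeft = (univ.filter (fun q : Fin n × Fin n =>
      (D.Interlocked q.1 q.2 ∧ D.TailFirst q.1 ∧ D.TailFirst q.2) ∧ q.1 ≠ A ∧ q.2 ≠ A)).card
      + ((univ.filter (fun B : Fin n =>
          D.Interlocked A B ∧ D.TailFirst A ∧ D.TailFirst B)).card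
        + (univ.filter (fun B : Fin n =>
          D.Interlocked B A ∧ D.TailFirst B ∧ D.TailFirst A)).card) := by
    have h := split_card_aux A (fun q : Fin n × Fin n =>
        D.Interlocked q.1 q.2 ∧ D.TailFirst q.1 ∧ D.TailFirst q.2)
      (fun hh => interlocked_irrefl D A hh.1)
    refine ((fcc _ _ fun q => Iff.rfl).trans h).trans ?_
    exact congrArg₂ (· + ·) (fcc _ _ fun q => Iff.rfl)
      (congrArg₂ (· + ·) (fcc _ _ fun B => Iff.rfl) (fcc _ _ fun B => Iff.rfl))
  have tR : D.dRight = (univ.filter (fun q : Fin n × Fin n =>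
      (D.Interlocked q.1 q.2 ∧ ¬ D.TailFirst q.1 ∧ ¬ D.TailFirst q.2) ∧ q.1 ≠ A ∧ q.2 ≠ A)).card
      + ((univ.filter (fun B : Fin n =>
          D.Interlocked A B ∧ ¬ D.TailFirst A ∧ ¬ D.TailFirst B)).card
        + (univ.filter (fun B : Fin n =>
          D.Interlocked B A ∧ ¬ D.TailFirst B ∧ ¬ D.TailFirst A)).card) := by
    have h := split_card_aux A (fun q : Fin n × Fin n =>
        D.Interlocked q.1 q.2 ∧ ¬ D.TailFirst q.1 ∧ ¬ D.TailFirst q.2)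
      (fun hh => interlocked_irrefl D A hh.1)
    refine ((fcc _ _ fun q => Iff.rfl).trans h).trans ?_
    exact congrArg₂ (· + ·) (fcc _ _ fun q => Iff.rfl)
      (congrArg₂ (· + ·) (fcc _ _ fun B => Iff.rfl) (fcc _ _ fun B => Iff.rfl))
  have tD : D.dDown = (univ.filter (fun q : Fin n × Fin n =>
      (D.Interlocked q.1 q.2 ∧ ¬ D.TailFirst q.1 ∧ D.TailFirst q.2) ∧ q.1 ≠ A ∧ q.2 ≠ A)).card
      + ((univ.filter (fun B : Fin n =>
          D.Interlocked A B ∧ ¬ D.TailFirst A ∧ D.TailFirst B)).card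
        + (univ.filter (fun B : Fin n =>
          D.Interlocked B A ∧ ¬ D.TailFirst B ∧ D.TailFirst A)).card) := by
    have h := split_card_aux A (fun q : Fin n × Fin n =>
        D.Interlocked q.1 q.2 ∧ ¬ D.TailFirst q.1 ∧ D.TailFirst q.2)
      (fun hh => interlocked_irrefl D A hh.1)
    refine ((fcc _ _ fun q => Iff.rfl).trans h).trans ?_
    exact congrArg₂ (· + ·) (fcc _ _ fun q => Iff.rfl)
      (congrArg₂ (· + ·) (fcc _ _ fun B => Iff.rfl) (fcc _ _ fun B => Iff.rfl))
  have tU' : D'.dUp = (univ.filter (fun q : Fin n × Fin n =>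
      (D'.Interlocked q.1 q.2 ∧ D'.TailFirst q.1 ∧ ¬ D'.TailFirst q.2) ∧ q.1 ≠ A ∧ q.2 ≠ A)).card
      + ((univ.filter (fun B : Fin n =>
          D'.Interlocked A B ∧ D'.TailFirst A ∧ ¬ D'.TailFirst B)).card
        + (univ.filter (fun B : Fin n =>
          D'.Interlocked B A ∧ D'.TailFirst B ∧ ¬ D'.TailFirst A)).card) := by
    have h := split_card_aux A (fun q : Fin n × Fin n =>
        D'.Interlocked q.1 q.2 ∧ D'.TailFirst q.1 ∧ ¬ D'.TailFirst q.2)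
      (fun hh => interlocked_irrefl D' A hh.1)
    refine ((fcc _ _ fun q => Iff.rfl).trans h).trans ?_
    exact congrArg₂ (· + ·) (fcc _ _ fun q => Iff.rfl)
      (congrArg₂ (· + ·) (fcc _ _ fun B => Iff.rfl) (fcc _ _ fun B => Iff.rfl))
  have tL' : D'.dLeft = (univ.filter (fun q : Fin n × Fin n =>
      (D'.Interlocked q.1 q.2 ∧ D'.TailFirst q.1 ∧ D'.TailFirst q.2) ∧ q.1 ≠ A ∧ q.2 ≠ A)).card
      + ((univ.filter (fun B : Fin n =>
          D'.Interlocked A B ∧ D'.TailFirst A ∧ D'.TailFirst B)).card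
        + (univ.filter (fun B : Fin n =>
          D'.Interlocked B A ∧ D'.TailFirst B ∧ D'.TailFirst A)).card) := by
    have h := split_card_aux A (fun q : Fin n × Fin n =>
        D'.Interlocked q.1 q.2 ∧ D'.TailFirst q.1 ∧ D'.TailFirst q.2)
      (fun hh => interlocked_irrefl D' A hh.1)
    refine ((fcc _ _ fun q => Iff.rfl).trans h).trans ?_
    exact congrArg₂ (· + ·) (fcc _ _ fun q => Iff.rfl)
      (congrArg₂ (· + ·) (fcc _ _ fun B => Iff.rfl) (fcc _ _ fun B => Iff.rfl))
  have tR' : D'.dRight = (univ.filter (fun q : Fin n × Fin n =>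
      (D'.Interlocked q.1 q.2 ∧ ¬ D'.TailFirst q.1 ∧ ¬ D'.TailFirst q.2) ∧ q.1 ≠ A ∧ q.2 ≠ A)).card
      + ((univ.filter (fun B : Fin n =>
          D'.Interlocked A B ∧ ¬ D'.TailFirst A ∧ ¬ D'.TailFirst B)).card
        + (univ.filter (fun B : Fin n =>
          D'.Interlocked B A ∧ ¬ D'.TailFirst B ∧ ¬ D'.TailFirst A)).card) := by
    have h := split_card_aux A (fun q : Fin n × Fin n =>
        D'.Interlocked q.1 q.2 ∧ ¬ D'.TailFirst q.1 ∧ ¬ D'.TailFirst q.2)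
      (fun hh => interlocked_irrefl D' A hh.1)
    refine ((fcc _ _ fun q => Iff.rfl).trans h).trans ?_
    exact congrArg₂ (· + ·) (fcc _ _ fun q => Iff.rfl)
      (congrArg₂ (· + ·) (fcc _ _ fun B => Iff.rfl) (fcc _ _ fun B => Iff.rfl))
  have tD' : D'.dDown = (univ.filter (fun q : Fin n × Fin n =>
      (D'.Interlocked q.1 q.2 ∧ ¬ D'.TailFirst q.1 ∧ D'.TailFirst q.2) ∧ q.1 ≠ A ∧ q.2 ≠ A)).card
      + ((univ.filter (fun B : Fin n =>
          D'.Interlocked A B ∧ ¬ D'.TailFirst A ∧ D'.TailFirst B)).card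
        + (univ.filter (fun B : Fin n =>
          D'.Interlocked B A ∧ ¬ D'.TailFirst B ∧ D'.TailFirst A)).card) := by
    have h := split_card_aux A (fun q : Fin n × Fin n =>
        D'.Interlocked q.1 q.2 ∧ ¬ D'.TailFirst q.1 ∧ D'.TailFirst q.2)
      (fun hh => interlocked_irrefl D' A hh.1)
    refine ((fcc _ _ fun q => Iff.rfl).trans h).trans ?_
    exact congrArg₂ (· + ·) (fcc _ _ fun q => Iff.rfl)
      (congrArg₂ (· + ·) (fcc _ _ fun B => Iff.rfl) (fcc _ _ fun B => Iff.rfl))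
  refine ⟨?_, ?_, ?_, ?_⟩
  · omega
  · omega
  · omega
  · omega

end ArrowDiagram

open ArrowDiagram in
/-- For a realizable based arrow diagram (realizability abstracted by the balance
condition of Lemma A): moving the base point past the tail of an arrow `A`
increases `d→` by `β` and decreases `d←` by `β`, where `β` is the number of arrows
forming a `d↑` configuration with `A`, and leaves `d↑` and `d⊥` unchanged;
moving it past the head of `A` increases `d←` by `β'` and decreases `d→` by `β'`,
where `β'` is the number of arrows forming a `d⊥` configuration with `A`,
and leaves `d↑` and `d⊥` unchanged. -/
theorem base_point_move_effect {n : ℕ} (D D' : ArrowDiagram n)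
    (hreal : D.Balanced) (hshift : D'.ShiftOf D) (A : Fin n) :
    ((D.tail A : ℕ) = 0 →
      D'.dRight = D.dRight + D.upWith A ∧
      D'.dLeft + D.upWith A = D.dLeft ∧
      D'.dUp = D.dUp ∧ D'.dDown = D.dDown) ∧
    ((D.head A : ℕ) = 0 →
      D'.dLeft = D.dLeft + D.downWith A ∧
      D'.dRight + D.downWith A = D.dRight ∧
      D'.dUp = D.dUp ∧ D'.dDown = D.dDown) := by
  constructor
  · intro h0
    exact tail_case D D' hreal hshift A h0
  · intro h0
    have h := tail_case (swapD D) (swapD D') (swap_balanced hreal) (swap_shift hshift) A h0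
    rw [swap_dRight, swap_dRight, swap_dLeft, swap_dLeft, swap_dUp, swap_dUp,
      swap_dDown, swap_dDown, swap_upWith] at h
    exact ⟨h.1, h.2.1, h.2.2.2, h.2.2.1⟩
end

section
/- Any weak second Reidemeister move can be realized as a finite sequence of first Reidemeister moves, strong second Reidemeister moves, and third Reidemeister moves; consequently, a function on spherical curves invariant under RI, strong RII, and RIII is invariant under all Reidemeister moves. -/
/-- An oriented Gauss word: a list of (letter, isHead) symbols. -/
abbrev GWord := List (ℕ × Bool)

/-- Every letter that occurs occurs exactly twice, once as a head and once as a tail. -/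
def IsGauss (w : GWord) : Prop :=
  ∀ a : ℕ, (w.countP (fun p => p.1 == a) = 0) ∨
    (w.countP (fun p => p == (a, true)) = 1 ∧ w.countP (fun p => p == (a, false)) = 1)

/-- A first Reidemeister move: insertion of a fresh letter with adjacent occurrences. -/
def RIins (w w' : GWord) : Prop :=
  ∃ (x y : GWord) (a : ℕ) (k : Bool),
    (∀ p ∈ x ++ y, p.1 ≠ a) ∧ w = x ++ y ∧ w' = x ++ [(a, k), (a, !k)] ++ y

/-- A strong second Reidemeister move: insertion of two fresh letters in the
nested pattern `a b … b a`. -/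
def StrongRIIins (w w' : GWord) : Prop :=
  ∃ (x y z : GWord) (a b : ℕ) (k : Bool),
    a ≠ b ∧ (∀ p ∈ x ++ y ++ z, p.1 ≠ a ∧ p.1 ≠ b) ∧ w = x ++ y ++ z ∧
    w' = x ++ [(a, k), (b, k)] ++ y ++ [(b, !k), (a, !k)] ++ z

/-- A weak second Reidemeister move: insertion of two fresh letters in the
interleaved pattern `a b … a b`. -/
def WeakRIIins (w w' : GWord) : Prop :=
  ∃ (x y z : GWord) (a b : ℕ) (k : Bool),
    a ≠ b ∧ (∀ p ∈ x ++ y ++ z, p.1 ≠ a ∧ p.1 ≠ b) ∧ w = x ++ y ++ z ∧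
    w' = x ++ [(a, k), (b, k)] ++ y ++ [(a, !k), (b, !k)] ++ z

/-- A third Reidemeister move: the three pairs of adjacent occurrences coming from
the triangle are each transposed. -/
def RIIImove (w w' : GWord) : Prop :=
  ∃ (x y z u : GWord) (a b c : ℕ) (ka kb kc : Bool),
    a ≠ b ∧ b ≠ c ∧ a ≠ c ∧
    w = x ++ [(a, ka), (b, kb)] ++ y ++ [(a, !ka), (c, kc)] ++ z
          ++ [(b, !kb), (c, !kc)] ++ u ∧
    w' = x ++ [(b, kb), (a, ka)] ++ y ++ [(c, kc), (a, !ka)] ++ z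
          ++ [(c, !kc), (b, !kb)] ++ u

/-- Moving the base point past one symbol (cyclic rotation of the word). -/
def Rot (w w' : GWord) : Prop := ∃ p t, w = p :: t ∧ w' = t ++ [p]

/-- One step: a base-point move, an RI move, a strong RII move, or an RIII move
(each in either direction). -/
def GenStep (w w' : GWord) : Prop :=
  Rot w w' ∨ Rot w' w ∨ RIins w w' ∨ RIins w' w ∨
    StrongRIIins w w' ∨ StrongRIIins w' w ∨ RIIImove w w' ∨ RIIImove w' w

/-- Rotating a whole prefix to the back is a chain of single rotations. -/
lemma rot_chain (u v : GWord) :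
    Relation.ReflTransGen GenStep (u ++ v) (v ++ u) := by
  induction u generalizing v with
  | nil => simpa using Relation.ReflTransGen.refl
  | cons p u ih =>
    refine Relation.ReflTransGen.head (Or.inl ⟨p, u ++ v, rfl, rfl⟩) ?_
    have h := ih (v ++ [p])
    have e1 : u ++ (v ++ [p]) = u ++ v ++ [p] := by simp
    have e2 : v ++ [p] ++ u = v ++ p :: u := by simp
    rw [e1, e2] at h
    exact h

/-- The main chain: a weak RII insertion is a chain of generating moves. -/
lemma weak_chain (x y z : GWord) (a b : ℕ) (k : Bool) (hab : a ≠ b)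
    (hfresh : ∀ p ∈ x ++ y ++ z, p.1 ≠ a ∧ p.1 ≠ b) :
    Relation.ReflTransGen GenStep (x ++ y ++ z)
      (x ++ [(a, k), (b, k)] ++ y ++ [(a, !k), (b, !k)] ++ z) := by
  set c : ℕ := a + b + ((x ++ y ++ z).map Prod.fst).sum + 1 with hc
  have hca : c ≠ a := by omega
  have hcb : c ≠ b := by omega
  have hcw : ∀ p ∈ x ++ y ++ z, p.1 ≠ c := by
    intro p hp
    have h1 : p.1 ∈ (x ++ y ++ z).map Prod.fst := List.mem_map_of_mem hp
    have h2 : p.1 ≤ ((x ++ y ++ z).map Prod.fst).sum :=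
      List.single_le_sum (fun q _ => Nat.zero_le q) _ h1
    omega
  have hAll : ∀ p : ℕ × Bool, (p ∈ x ∨ p ∈ y ∨ p ∈ z) → p.1 ≠ a ∧ p.1 ≠ b ∧ p.1 ≠ c := by
    intro p hp
    have hm : p ∈ x ++ y ++ z := by simp; tauto
    exact ⟨(hfresh p hm).1, (hfresh p hm).2, hcw p hm⟩
  have s1 : Relation.ReflTransGen GenStep (x ++ y ++ z) (z ++ (x ++ y)) :=
    rot_chain (x ++ y) z
  have s2 : GenStep (z ++ (x ++ y)) (z ++ (x ++ y) ++ [(c, k), (c, !k)]) := by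
    refine Or.inr (Or.inr (Or.inl ⟨z ++ (x ++ y), [], c, k, ?_, by simp, by simp⟩))
    intro p hp
    have hm : p ∈ x ∨ p ∈ y ∨ p ∈ z := by simp at hp; tauto
    exact (hAll p hm).2.2
  have s3 : Relation.ReflTransGen GenStep (z ++ (x ++ y) ++ [(c, k), (c, !k)])
      (y ++ [(c, k), (c, !k)] ++ (z ++ x)) := by
    have h := rot_chain (z ++ x) (y ++ [(c, k), (c, !k)])
    have e1 : z ++ x ++ (y ++ [(c, k), (c, !k)]) = z ++ (x ++ y) ++ [(c, k), (c, !k)] := by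
      simp
    rw [e1] at h
    exact h
  have s4 : GenStep (y ++ [(c, k), (c, !k)] ++ (z ++ x))
      ((y ++ [(c, k)]) ++ [(a, !k), (b, !k)] ++ ([(c, !k)] ++ z ++ x)
        ++ [(b, !(!k)), (a, !(!k))] ++ []) := by
    refine Or.inr (Or.inr (Or.inr (Or.inr (Or.inl
      ⟨y ++ [(c, k)], [(c, !k)] ++ z ++ x, [], a, b, !k, hab, ?_, by simp, by simp⟩))))
    intro p hp
    have hm : p ∈ x ∨ p ∈ y ∨ p ∈ z ∨ p = (c, k) ∨ p = (c, !k) := by simp at hp; tauto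
    rcases hm with h | h | h | h | h
    · exact ⟨(hAll p (Or.inl h)).1, (hAll p (Or.inl h)).2.1⟩
    · exact ⟨(hAll p (Or.inr (Or.inl h))).1, (hAll p (Or.inr (Or.inl h))).2.1⟩
    · exact ⟨(hAll p (Or.inr (Or.inr h))).1, (hAll p (Or.inr (Or.inr h))).2.1⟩
    · subst h; exact ⟨hca, hcb⟩
    · subst h; exact ⟨hca, hcb⟩
  have s5 : Relation.ReflTransGen GenStep
      ((y ++ [(c, k)]) ++ [(a, !k), (b, !k)] ++ ([(c, !k)] ++ z ++ x)
        ++ [(b, !(!k)), (a, !(!k))] ++ [])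
      ([(b, !k), (c, !k)] ++ (z ++ x) ++ [(b, k), (a, k)] ++ y ++ [(c, k), (a, !k)]) := by
    have h := rot_chain (y ++ [(c, k), (a, !k)])
      ([(b, !k), (c, !k)] ++ (z ++ x) ++ [(b, k), (a, k)])
    have e1 : y ++ [(c, k), (a, !k)] ++ ([(b, !k), (c, !k)] ++ (z ++ x) ++ [(b, k), (a, k)])
        = (y ++ [(c, k)]) ++ [(a, !k), (b, !k)] ++ ([(c, !k)] ++ z ++ x)
          ++ [(b, !(!k)), (a, !(!k))] ++ [] := by simp
    have e2 : [(b, !k), (c, !k)] ++ (z ++ x) ++ [(b, k), (a, k)] ++ (y ++ [(c, k), (a, !k)])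
        = [(b, !k), (c, !k)] ++ (z ++ x) ++ [(b, k), (a, k)] ++ y ++ [(c, k), (a, !k)] := by
      simp
    rw [e1, e2] at h
    exact h
  have s6 : GenStep
      ([(b, !k), (c, !k)] ++ (z ++ x) ++ [(b, k), (a, k)] ++ y ++ [(c, k), (a, !k)])
      ([(c, !k), (b, !k)] ++ (z ++ x) ++ [(a, k), (b, k)] ++ y ++ [(a, !k), (c, k)]) := by
    refine Or.inr (Or.inr (Or.inr (Or.inr (Or.inr (Or.inr (Or.inl
      ⟨[], z ++ x, y, [], b, c, a, !k, !k, k, Ne.symm hcb, hca, fun h => hab h.symm,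
        ?_, ?_⟩)))))) <;> simp
  have s7 : GenStep
      ([(c, !k), (b, !k)] ++ (z ++ x) ++ [(a, k), (b, k)] ++ y ++ [(a, !k), (c, k)])
      ([(c, k), (c, !k), (b, !k)] ++ (z ++ x) ++ [(a, k), (b, k)] ++ y ++ [(a, !k)]) := by
    refine Or.inr (Or.inl ⟨(c, k),
      [(c, !k), (b, !k)] ++ (z ++ x) ++ [(a, k), (b, k)] ++ y ++ [(a, !k)], by simp, by simp⟩)
  have s8 : GenStep
      ([(c, k), (c, !k), (b, !k)] ++ (z ++ x) ++ [(a, k), (b, k)] ++ y ++ [(a, !k)])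
      ([(b, !k)] ++ (z ++ x) ++ [(a, k), (b, k)] ++ y ++ [(a, !k)]) := by
    refine Or.inr (Or.inr (Or.inr (Or.inl
      ⟨[], [(b, !k)] ++ (z ++ x) ++ [(a, k), (b, k)] ++ y ++ [(a, !k)], c, k, ?_, by simp,
        by simp⟩)))
    intro p hp
    have hm : p ∈ x ∨ p ∈ y ∨ p ∈ z ∨ p = (a, k) ∨ p = (b, k) ∨ p = (a, !k) ∨ p = (b, !k) := by
      simp at hp; tauto
    rcases hm with h | h | h | h | h | h | h
    · exact (hAll p (Or.inl h)).2.2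
    · exact (hAll p (Or.inr (Or.inl h))).2.2
    · exact (hAll p (Or.inr (Or.inr h))).2.2
    · subst h; exact hca.symm
    · subst h; exact hcb.symm
    · subst h; exact hca.symm
    · subst h; exact hcb.symm
  have s9 : Relation.ReflTransGen GenStep
      ([(b, !k)] ++ (z ++ x) ++ [(a, k), (b, k)] ++ y ++ [(a, !k)])
      (x ++ [(a, k), (b, k)] ++ y ++ [(a, !k), (b, !k)] ++ z) := by
    have h := rot_chain ([(b, !k)] ++ z) (x ++ [(a, k), (b, k)] ++ y ++ [(a, !k)])
    have e1 : [(b, !k)] ++ z ++ (x ++ [(a, k), (b, k)] ++ y ++ [(a, !k)])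
        = [(b, !k)] ++ (z ++ x) ++ [(a, k), (b, k)] ++ y ++ [(a, !k)] := by simp
    have e2 : x ++ [(a, k), (b, k)] ++ y ++ [(a, !k)] ++ ([(b, !k)] ++ z)
        = x ++ [(a, k), (b, k)] ++ y ++ [(a, !k), (b, !k)] ++ z := by simp
    rw [e1, e2] at h
    exact h
  exact ((((((((s1.tail s2).trans s3).tail s4).trans s5).tail s6).tail s7).tail s8).trans s9)

lemma chain_invariant (f : GWord → ℤ) (hf : ∀ w w', GenStep w w' → f w = f w')
    {w w' : GWord} (h : Relation.ReflTransGen GenStep w w') : f w = f w' := by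
  induction h with
  | refl => rfl
  | tail _ hstep ih => exact ih.trans (hf _ _ hstep)

/-- Any weak second Reidemeister move on a spherical curve is a finite sequence of
base-point moves, RI moves, strong RII moves and RIII moves; consequently any
function on spherical curves invariant under base-point moves, RI, strong RII and
RIII is invariant under all Reidemeister moves, in particular under weak RII. -/
theorem weakRII_generated_by_RI_strongRII_RIII :
    (∀ w w' : GWord, IsGauss w → WeakRIIins w w' →
      Relation.ReflTransGen GenStep w w') ∧
    (∀ f : GWord → ℤ, (∀ w w', GenStep w w' → f w = f w') →
      ∀ w w' : GWord, IsGauss w → IsGauss w' →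
        (WeakRIIins w w' ∨ WeakRIIins w' w) → f w = f w') := by
  have main : ∀ w w' : GWord, WeakRIIins w w' → Relation.ReflTransGen GenStep w w' := by
    rintro w w' ⟨x, y, z, a, b, k, hab, hfresh, hw, hw'⟩
    rw [hw, hw']
    exact weak_chain x y z a b k hab hfresh
  refine ⟨fun w w' _ h => main w w' h, fun f hf w w' _ _ h => ?_⟩
  rcases h with h | h
  · exact chain_invariant f hf (main w w' h)
  · exact (chain_invariant f hf (main w' w h)).symm
end

section
/- The functions d↑, d←+d→−d⊥, and d↑−d←−d→+d⊥ on spherical curves are additive under connected sum: for any spherical curves P, P' and any connected sum P # P', the value on P # P' equals the sum of the values on P and P'. -/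
open scoped Classical

namespace ConnSumAux
open ArrowDiagram Finset

lemma val_min' {k : ℕ} (x y : Fin k) : ((min x y : Fin k) : ℕ) = min (x : ℕ) (y : ℕ) := by
  rcases le_total x y with h | h
  · rw [min_eq_left h, min_eq_left (Fin.le_def.mp h)]
  · rw [min_eq_right h, min_eq_right (Fin.le_def.mp h)]

lemma val_max' {k : ℕ} (x y : Fin k) : ((max x y : Fin k) : ℕ) = max (x : ℕ) (y : ℕ) := by
  rcases le_total x y with h | h
  · rw [max_eq_right h, max_eq_right (Fin.le_def.mp h)]
  · rw [max_eq_left h, max_eq_left (Fin.le_def.mp h)]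

/-- Uniform count of interlocked pairs by tail-first pattern. -/
noncomputable def cnt {k : ℕ} (D : ArrowDiagram k) (A B : Bool) : ℕ :=
  (Finset.univ.filter (fun p : Fin k × Fin k =>
    D.Interlocked p.1 p.2 ∧ (D.TailFirst p.1 ↔ A = true) ∧ (D.TailFirst p.2 ↔ B = true))).card

lemma dUp_eq_cnt {k : ℕ} (D : ArrowDiagram k) : D.dUp = cnt D true false := by
  unfold dUp cnt
  congr 1
  apply Finset.filter_congr
  intro x _
  tauto

lemma dLeft_eq_cnt {k : ℕ} (D : ArrowDiagram k) : D.dLeft = cnt D true true := by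
  unfold dLeft cnt
  congr 1
  apply Finset.filter_congr
  intro x _
  tauto

lemma dRight_eq_cnt {k : ℕ} (D : ArrowDiagram k) : D.dRight = cnt D false false := by
  unfold dRight cnt
  congr 1
  apply Finset.filter_congr
  intro x _
  tauto

lemma dDown_eq_cnt {k : ℕ} (D : ArrowDiagram k) : D.dDown = cnt D false true := by
  unfold dDown cnt
  congr 1
  apply Finset.filter_congr
  intro x _
  tauto

lemma fin_decomp {n m : ℕ} (x : Fin (n + m)) :
    (∃ a : Fin n, x = Fin.castAdd m a) ∨ (∃ b : Fin m, x = Fin.natAdd n b) := by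
  rcases lt_or_ge (x : ℕ) n with h | h
  · exact Or.inl ⟨⟨x, h⟩, by ext; simp⟩
  · refine Or.inr ⟨⟨(x : ℕ) - n, by omega⟩, ?_⟩
    ext
    simp [Fin.natAdd]
    omega

section Transfer

variable {n m : ℕ} (P : ArrowDiagram n) (P' : ArrowDiagram m) (D : ArrowDiagram (n + m))
  (h1 : ∀ a : Fin n, (D.tail (Fin.castAdd m a) : ℕ) = (P.tail a : ℕ) ∧
    (D.head (Fin.castAdd m a) : ℕ) = (P.head a : ℕ))
  (h2 : ∀ b : Fin m, (D.tail (Fin.natAdd n b) : ℕ) = 2 * n + (P'.tail b : ℕ) ∧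
    (D.head (Fin.natAdd n b) : ℕ) = 2 * n + (P'.head b : ℕ))

include h1 in
lemma first_cast (a : Fin n) : (D.first (Fin.castAdd m a) : ℕ) = (P.first a : ℕ) := by
  unfold ArrowDiagram.first
  rw [val_min', val_min', (h1 a).1, (h1 a).2]

include h1 in
lemma second_cast (a : Fin n) : (D.second (Fin.castAdd m a) : ℕ) = (P.second a : ℕ) := by
  unfold ArrowDiagram.second
  rw [val_max', val_max', (h1 a).1, (h1 a).2]

include h2 in
lemma first_nat (b : Fin m) : (D.first (Fin.natAdd n b) : ℕ) = 2 * n + (P'.first b : ℕ) := by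
  unfold ArrowDiagram.first
  rw [val_min', val_min', (h2 b).1, (h2 b).2]
  omega

include h2 in
lemma second_nat (b : Fin m) : (D.second (Fin.natAdd n b) : ℕ) = 2 * n + (P'.second b : ℕ) := by
  unfold ArrowDiagram.second
  rw [val_max', val_max', (h2 b).1, (h2 b).2]
  omega

include h1 in
lemma tf_cast (a : Fin n) : D.TailFirst (Fin.castAdd m a) ↔ P.TailFirst a := by
  unfold ArrowDiagram.TailFirst
  rw [Fin.lt_def, Fin.lt_def, (h1 a).1, (h1 a).2]

include h2 in
lemma tf_nat (b : Fin m) : D.TailFirst (Fin.natAdd n b) ↔ P'.TailFirst b := by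
  unfold ArrowDiagram.TailFirst
  rw [Fin.lt_def, Fin.lt_def, (h2 b).1, (h2 b).2]
  omega

include h1 in
lemma inter_cast (a a' : Fin n) :
    D.Interlocked (Fin.castAdd m a) (Fin.castAdd m a') ↔ P.Interlocked a a' := by
  unfold ArrowDiagram.Interlocked
  rw [Fin.lt_def, Fin.lt_def, Fin.lt_def, Fin.lt_def, Fin.lt_def, Fin.lt_def,
    first_cast P D h1, first_cast P D h1, second_cast P D h1, second_cast P D h1]

include h2 in
lemma inter_nat (b b' : Fin m) :
    D.Interlocked (Fin.natAdd n b) (Fin.natAdd n b') ↔ P'.Interlocked b b' := by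
  unfold ArrowDiagram.Interlocked
  rw [Fin.lt_def, Fin.lt_def, Fin.lt_def, Fin.lt_def, Fin.lt_def, Fin.lt_def,
    first_nat P' D h2, first_nat P' D h2, second_nat P' D h2, second_nat P' D h2]
  omega

include h1 h2 in
lemma not_inter_cn (a : Fin n) (b : Fin m) :
    ¬ D.Interlocked (Fin.castAdd m a) (Fin.natAdd n b) := by
  rintro ⟨-, h, -⟩
  rw [Fin.lt_def, first_nat P' D h2, second_cast P D h1] at h
  have := (P.second a).is_lt
  omega

include h1 h2 in
lemma not_inter_nc (a : Fin n) (b : Fin m) :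
    ¬ D.Interlocked (Fin.natAdd n b) (Fin.castAdd m a) := by
  rintro ⟨h, -, -⟩
  rw [Fin.lt_def, first_nat P' D h2, first_cast P D h1] at h
  have := (P.first a).is_lt
  omega

include h1 h2 in
lemma cnt_add (A B : Bool) : cnt D A B = cnt P A B + cnt P' A B := by
  classical
  unfold cnt
  set f : Fin n × Fin n → Fin (n + m) × Fin (n + m) :=
    fun p => (Fin.castAdd m p.1, Fin.castAdd m p.2) with hf
  set g : Fin m × Fin m → Fin (n + m) × Fin (n + m) :=
    fun p => (Fin.natAdd n p.1, Fin.natAdd n p.2) with hg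
  have finj : Function.Injective f := by
    rintro ⟨a, a'⟩ ⟨c, c'⟩ h
    simp only [hf, Prod.mk.injEq] at h
    exact Prod.ext (Fin.castAdd_injective n m h.1) (Fin.castAdd_injective n m h.2)
  have ginj : Function.Injective g := by
    rintro ⟨a, a'⟩ ⟨c, c'⟩ h
    simp only [hg, Prod.mk.injEq] at h
    have i : Function.Injective (Fin.natAdd n : Fin m → Fin (n + m)) := by
      intro u v huv
      have := congrArg Fin.val huv
      simp [Fin.natAdd] at this
      exact Fin.ext this
    exact Prod.ext (i h.1) (i h.2)
  have himg : (Finset.univ.filter (fun p : Fin (n + m) × Fin (n + m) =>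
      D.Interlocked p.1 p.2 ∧ (D.TailFirst p.1 ↔ A = true) ∧ (D.TailFirst p.2 ↔ B = true)))
      = ((Finset.univ.filter (fun p : Fin n × Fin n =>
          P.Interlocked p.1 p.2 ∧ (P.TailFirst p.1 ↔ A = true) ∧ (P.TailFirst p.2 ↔ B = true))).image f)
      ∪ ((Finset.univ.filter (fun p : Fin m × Fin m =>
          P'.Interlocked p.1 p.2 ∧ (P'.TailFirst p.1 ↔ A = true) ∧ (P'.TailFirst p.2 ↔ B = true))).image g) := by
    ext ⟨x, y⟩
    simp only [Finset.mem_filter, Finset.mem_union, Finset.mem_image, Finset.mem_univ, true_and,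
      Prod.exists, hf, hg, Prod.mk.injEq]
    constructor
    · rintro ⟨hi, hA, hB⟩
      rcases fin_decomp x with ⟨a, rfl⟩ | ⟨b, rfl⟩ <;> rcases fin_decomp y with ⟨a', rfl⟩ | ⟨b', rfl⟩
      · exact Or.inl ⟨a, a', ⟨(inter_cast P D h1 a a').mp hi,
          (tf_cast P D h1 a).symm.trans hA |>.symm.symm, (tf_cast P D h1 a').symm.trans hB⟩, rfl, rfl⟩
      · exact absurd hi (not_inter_cn P P' D h1 h2 a b')
      · exact absurd hi (not_inter_nc P P' D h1 h2 a' b)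
      · exact Or.inr ⟨b, b', ⟨(inter_nat P' D h2 b b').mp hi,
          (tf_nat P' D h2 b).symm.trans hA, (tf_nat P' D h2 b').symm.trans hB⟩, rfl, rfl⟩
    · rintro (⟨a, a', ⟨hi, hA, hB⟩, rfl, rfl⟩ | ⟨b, b', ⟨hi, hA, hB⟩, rfl, rfl⟩)
      · exact ⟨(inter_cast P D h1 a a').mpr hi, (tf_cast P D h1 a).trans hA,
          (tf_cast P D h1 a').trans hB⟩
      · exact ⟨(inter_nat P' D h2 b b').mpr hi, (tf_nat P' D h2 b).trans hA,
          (tf_nat P' D h2 b').trans hB⟩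
  have hdisj : Disjoint ((Finset.univ.filter (fun p : Fin n × Fin n =>
      P.Interlocked p.1 p.2 ∧ (P.TailFirst p.1 ↔ A = true) ∧ (P.TailFirst p.2 ↔ B = true))).image f)
      ((Finset.univ.filter (fun p : Fin m × Fin m =>
      P'.Interlocked p.1 p.2 ∧ (P'.TailFirst p.1 ↔ A = true) ∧ (P'.TailFirst p.2 ↔ B = true))).image g) := by
    rw [Finset.disjoint_left]
    rintro z hz hz'
    simp only [Finset.mem_image, hf, hg] at hz hz'
    obtain ⟨p, -, rfl⟩ := hz
    obtain ⟨q, -, hq⟩ := hz'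
    have := congrArg (fun w : Fin (n + m) × Fin (n + m) => (w.1 : ℕ)) hq
    simp [Fin.natAdd] at this
    omega
  rw [himg, Finset.card_union_of_disjoint hdisj,
    Finset.card_image_of_injective _ finj, Finset.card_image_of_injective _ ginj]

end Transfer
end ConnSumAux

open ArrowDiagram in
/-- The functions `d↑`, `d←+d→−d⊥` and `d↑−d←−d→+d⊥` on spherical curves are
additive under connected sum.  Here `D` is the arrow diagram of a connected sum
`P # P'`: the Gauss words of `P` and `P'` are concatenated (the arrows of `P`
occupy positions `0,…,2n−1`, those of `P'` positions `2n,…,2n+2m−1`). -/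
theorem invariants_additive_under_connected_sum
    {n m : ℕ} (P : ArrowDiagram n) (P' : ArrowDiagram m)
    (D : ArrowDiagram (n + m))
    (h1 : ∀ a : Fin n, (D.tail (Fin.castAdd m a) : ℕ) = (P.tail a : ℕ) ∧
      (D.head (Fin.castAdd m a) : ℕ) = (P.head a : ℕ))
    (h2 : ∀ b : Fin m, (D.tail (Fin.natAdd n b) : ℕ) = 2 * n + (P'.tail b : ℕ) ∧
      (D.head (Fin.natAdd n b) : ℕ) = 2 * n + (P'.head b : ℕ)) :
    (D.dUp : ℤ) = P.dUp + P'.dUp ∧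
    ((D.dLeft : ℤ) + D.dRight - D.dDown) =
      ((P.dLeft : ℤ) + P.dRight - P.dDown) +
      ((P'.dLeft : ℤ) + P'.dRight - P'.dDown) ∧
    ((D.dUp : ℤ) - D.dLeft - D.dRight + D.dDown) =
      ((P.dUp : ℤ) - P.dLeft - P.dRight + P.dDown) +
      ((P'.dUp : ℤ) - P'.dLeft - P'.dRight + P'.dDown) := by
  have key := ConnSumAux.cnt_add P P' D h1 h2
  have e1 : D.dUp = P.dUp + P'.dUp := by
    rw [ConnSumAux.dUp_eq_cnt, ConnSumAux.dUp_eq_cnt, ConnSumAux.dUp_eq_cnt, key]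
  have e2 : D.dLeft = P.dLeft + P'.dLeft := by
    rw [ConnSumAux.dLeft_eq_cnt, ConnSumAux.dLeft_eq_cnt, ConnSumAux.dLeft_eq_cnt, key]
  have e3 : D.dRight = P.dRight + P'.dRight := by
    rw [ConnSumAux.dRight_eq_cnt, ConnSumAux.dRight_eq_cnt, ConnSumAux.dRight_eq_cnt, key]
  have e4 : D.dDown = P.dDown + P'.dDown := by
    rw [ConnSumAux.dDown_eq_cnt, ConnSumAux.dDown_eq_cnt, ConnSumAux.dDown_eq_cnt, key]
  refine ⟨?_, ?_, ?_⟩ <;> omega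
end

section
/- The function μ(P) = 2·d⊥(P) − 2·d←(P) − 2·d→(P) + 2·d↑(P) + s(P) − c(P) satisfies μ(P # P') = μ(P) + μ(P') − 1 for any connected sum of spherical curves P and P'. -/
open scoped Classical

namespace ArrowDiagram

/-- The other endpoint of the arrow through position `p`. -/
noncomputable def partner {n : ℕ} (D : ArrowDiagram n) (p : Fin (2 * n)) :
    Fin (2 * n) :=
  if h : ∃ a, D.tail a = p then D.head h.choose
  else if h' : ∃ a, D.head a = p then D.tail h'.choose else p

/-- The number of Seifert circles: the number of cycles of the permutation
sending each position to the successor of its partner (this is the effect of the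
orientation-respecting smoothing of every double point).  The empty diagram gives
the one Seifert circle of the simple closed curve. -/
noncomputable def sCount {n : ℕ} (D : ArrowDiagram n) : ℕ :=
  if n = 0 then 1 else
    Nat.card (Quot (fun p q : Fin (2 * n) =>
      ((D.partner p : ℕ) + 1) % (2 * n) = (q : ℕ)))

/-- The number of double points. -/
def cCount {n : ℕ} (_ : ArrowDiagram n) : ℕ := n

end ArrowDiagram


-- ===================== auxiliary development =====================
section MuAux
open ArrowDiagram Relation

set_option linter.unusedSectionVars false

section QuotLemmas
variable {α β : Type*}

lemma eqvGen_map (f : α → β) {r : α → α → Prop} {s : β → β → Prop}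
    (h : ∀ a b, r a b → s (f a) (f b)) {a b : α} (hab : EqvGen r a b) :
    EqvGen s (f a) (f b) := by
  induction hab with
  | rel a b h' => exact EqvGen.rel _ _ (h _ _ h')
  | refl => exact EqvGen.refl _
  | symm a b _ ih => exact EqvGen.symm _ _ ih
  | trans a b c _ _ ih1 ih2 => exact EqvGen.trans _ _ _ ih1 ih2

noncomputable def quotEquivOfEqvGen (e : α ≃ β) {r : α → α → Prop} {s : β → β → Prop}
    (h1 : ∀ a b, r a b → EqvGen s (e a) (e b))
    (h2 : ∀ a b, s a b → EqvGen r (e.symm a) (e.symm b)) : Quot r ≃ Quot s where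
  toFun := Quot.lift (fun a => Quot.mk s (e a)) (fun a b hab => Quot.eqvGen_sound (h1 a b hab))
  invFun := Quot.lift (fun b => Quot.mk r (e.symm b)) (fun a b hab => Quot.eqvGen_sound (h2 a b hab))
  left_inv := by
    intro x
    induction x using Quot.ind with
    | _ a => simp
  right_inv := by
    intro x
    induction x using Quot.ind with
    | _ b => simp

end QuotLemmas

namespace ArrowDiagram

variable {k : ℕ} (Q : ArrowDiagram k)

lemma endpoint_exists (p : Fin (2 * k)) : ∃ a, Q.tail a = p ∨ Q.head a = p := by
  have hcard : Fintype.card (Fin k × Bool) = Fintype.card (Fin (2 * k)) := by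
    simp [two_mul, mul_comm]
  have hsurj := (Fintype.bijective_iff_injective_and_card _).2 ⟨Q.inj, hcard⟩ |>.2
  obtain ⟨⟨a, b⟩, hb⟩ := hsurj p
  cases b with
  | false => exact ⟨a, Or.inl hb⟩
  | true => exact ⟨a, Or.inr hb⟩

lemma partner_tail {a p} (h : Q.tail a = p) : Q.partner p = Q.head a := by
  have hex : ∃ a', Q.tail a' = p := ⟨a, h⟩
  have hc : hex.choose = a := by
    have := Q.inj (a₁ := (hex.choose, false)) (a₂ := (a, false))
      (by simpa using hex.choose_spec.trans h.symm)
    simpa using congrArg Prod.fst this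
  rw [partner, dif_pos hex, hc]

lemma partner_head {a p} (h : Q.head a = p) : Q.partner p = Q.tail a := by
  have hnex : ¬ ∃ a', Q.tail a' = p := by
    rintro ⟨a', ha'⟩
    have := Q.inj (a₁ := (a', false)) (a₂ := (a, true)) (by simpa using ha'.trans h.symm)
    simpa using congrArg Prod.snd this
  have hex : ∃ a', Q.head a' = p := ⟨a, h⟩
  have hc : hex.choose = a := by
    have := Q.inj (a₁ := (hex.choose, true)) (a₂ := (a, true))
      (by simpa using hex.choose_spec.trans h.symm)
    simpa using congrArg Prod.fst this
  rw [partner, dif_neg hnex, dif_pos hex, hc]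

lemma partner_partner (p : Fin (2 * k)) : Q.partner (Q.partner p) = p := by
  obtain ⟨a, h | h⟩ := Q.endpoint_exists p
  · rw [Q.partner_tail h, Q.partner_head rfl, h]
  · rw [Q.partner_head h, Q.partner_tail rfl, h]

lemma partner_involutive : Function.Involutive Q.partner := Q.partner_partner

lemma partner_injective : Function.Injective Q.partner := Q.partner_involutive.injective

noncomputable def sig (hk : 0 < k) (p : Fin (2 * k)) : Fin (2 * k) :=
  ⟨((Q.partner p : ℕ) + 1) % (2 * k), Nat.mod_lt _ (by omega)⟩

lemma sig_injective (hk : 0 < k) : Function.Injective (Q.sig hk) := by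
  intro p q h
  have h' : ((Q.partner p : ℕ) + 1) % (2 * k) = ((Q.partner q : ℕ) + 1) % (2 * k) :=
    congrArg Fin.val h
  have hp : (Q.partner p : ℕ) < 2 * k := (Q.partner p).isLt
  have hq : (Q.partner q : ℕ) < 2 * k := (Q.partner q).isLt
  have : (Q.partner p : ℕ) = (Q.partner q : ℕ) := by
    rcases Nat.lt_or_ge ((Q.partner p : ℕ) + 1) (2 * k) with h1 | h1 <;>
    rcases Nat.lt_or_ge ((Q.partner q : ℕ) + 1) (2 * k) with h2 | h2
    · rwa [Nat.mod_eq_of_lt h1, Nat.mod_eq_of_lt h2, Nat.add_right_cancel_iff] at h'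
    · have hq2 : (Q.partner q : ℕ) + 1 = 2 * k := by omega
      rw [Nat.mod_eq_of_lt h1, hq2, Nat.mod_self] at h'; omega
    · have hp2 : (Q.partner p : ℕ) + 1 = 2 * k := by omega
      rw [Nat.mod_eq_of_lt h2, hp2, Nat.mod_self] at h'; omega
    · omega
  exact Q.partner_injective (Fin.ext this)

noncomputable def sigPerm (hk : 0 < k) : Equiv.Perm (Fin (2 * k)) :=
  Equiv.ofBijective _ (Finite.injective_iff_bijective.mp (Q.sig_injective hk))

lemma sigPerm_apply (hk : 0 < k) (p : Fin (2 * k)) :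
    Q.sigPerm hk p = Q.sig hk p := rfl

lemma exists_pow_eq (hk : 0 < k) (x : Fin (2 * k)) :
    ∃ j : ℕ, ((Q.sigPerm hk) ^ j) (Q.sigPerm hk x) = x := by
  set f := Q.sigPerm hk
  have hord : 0 < orderOf f := orderOf_pos f
  refine ⟨orderOf f - 1, ?_⟩
  have h1 : f ^ (orderOf f - 1) * f = f ^ orderOf f := by
    rw [← pow_succ, Nat.sub_add_cancel hord]
  have h2 : (f ^ orderOf f) x = x := by rw [pow_orderOf_eq_one]; rfl
  rw [← Equiv.Perm.mul_apply, h1, h2]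

end ArrowDiagram

namespace MuAux
open ArrowDiagram

lemma fin_val_min {k : ℕ} (x y : Fin k) : ((min x y : Fin k) : ℕ) = min (x : ℕ) (y : ℕ) := by
  rcases le_total x y with h | h
  · rw [min_eq_left h, min_eq_left (Fin.le_def.mp h)]
  · rw [min_eq_right h, min_eq_right (Fin.le_def.mp h)]

lemma fin_val_max {k : ℕ} (x y : Fin k) : ((max x y : Fin k) : ℕ) = max (x : ℕ) (y : ℕ) := by
  rcases le_total x y with h | h
  · rw [max_eq_right h, max_eq_right (Fin.le_def.mp h)]
  · rw [max_eq_left h, max_eq_left (Fin.le_def.mp h)]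

lemma filter_split {n m : ℕ} (q : Fin (n + m) → Fin (n + m) → Prop)
    (qa : Fin n → Fin n → Prop) (qb : Fin m → Fin m → Prop)
    (hL : ∀ a b, q (Fin.castAdd m a) (Fin.castAdd m b) ↔ qa a b)
    (hR : ∀ a b, q (Fin.natAdd n a) (Fin.natAdd n b) ↔ qb a b)
    (hLR : ∀ a b, ¬ q (Fin.castAdd m a) (Fin.natAdd n b))
    (hRL : ∀ a b, ¬ q (Fin.natAdd n a) (Fin.castAdd m b))
    [DecidablePred fun p : Fin (n+m) × Fin (n+m) => q p.1 p.2]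
    [DecidablePred fun p : Fin n × Fin n => qa p.1 p.2]
    [DecidablePred fun p : Fin m × Fin m => qb p.1 p.2] :
    (Finset.univ.filter fun p : Fin (n+m) × Fin (n+m) => q p.1 p.2).card =
      (Finset.univ.filter fun p : Fin n × Fin n => qa p.1 p.2).card +
      (Finset.univ.filter fun p : Fin m × Fin m => qb p.1 p.2).card := by
  rw [Finset.card_filter, Finset.card_filter, Finset.card_filter]
  rw [← Fintype.sum_equiv (Equiv.prodCongr finSumFinEquiv finSumFinEquiv)
    (fun x : (Fin n ⊕ Fin m) × (Fin n ⊕ Fin m) =>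
      if q (finSumFinEquiv x.1) (finSumFinEquiv x.2) then 1 else 0)
    (fun p => if q p.1 p.2 then 1 else 0) (fun x => by obtain ⟨x1, x2⟩ := x; simp)]
  rw [Fintype.sum_prod_type]
  rw [Fintype.sum_sum_type]
  simp only [Fintype.sum_sum_type, finSumFinEquiv_apply_left, finSumFinEquiv_apply_right]
  have e1 : ∀ a : Fin n, ∀ b : Fin m,
      (if q (Fin.castAdd m a) (Fin.natAdd n b) then (1:ℕ) else 0) = 0 :=
    fun a b => if_neg (hLR a b)
  have e2 : ∀ a : Fin m, ∀ b : Fin n,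
      (if q (Fin.natAdd n a) (Fin.castAdd m b) then (1:ℕ) else 0) = 0 :=
    fun a b => if_neg (hRL a b)
  simp only [hL, hR, e1, e2, Finset.sum_const_zero, add_zero, zero_add]
  simp only [Fintype.sum_prod_type]
  congr!
  all_goals simp [hLR, hRL, -Finset.sum_boole]
  all_goals congr!


section SCount

def posL (n m : ℕ) (p : Fin (2 * n)) : Fin (2 * (n + m)) := ⟨p.1, by have := p.2; omega⟩

def posR (n m : ℕ) (q : Fin (2 * m)) : Fin (2 * (n + m)) := ⟨2 * n + q.1, by have := q.2; omega⟩

def srel {k : ℕ} (Q : ArrowDiagram k) : Fin (2 * k) → Fin (2 * k) → Prop :=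
  fun p q => ((Q.partner p : ℕ) + 1) % (2 * k) = (q : ℕ)

lemma sCount_def {k : ℕ} (Q : ArrowDiagram k) (hk : k ≠ 0) :
    Q.sCount = Nat.card (Quot (srel Q)) := by
  rw [ArrowDiagram.sCount, if_neg hk]; rfl

lemma sCount_zero {k : ℕ} (Q : ArrowDiagram k) (hk : k = 0) : Q.sCount = 1 := by
  rw [ArrowDiagram.sCount, if_pos hk]

lemma sCount_congr {k1 k2 : ℕ} (hk : k1 = k2) (D1 : ArrowDiagram k1) (D2 : ArrowDiagram k2)
    (hp : ∀ (p : Fin (2 * k1)) (q : Fin (2 * k2)),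
      (p : ℕ) = (q : ℕ) → (D1.partner p : ℕ) = (D2.partner q : ℕ)) :
    D1.sCount = D2.sCount := by
  subst hk
  have hpart : D1.partner = D2.partner := funext fun p => Fin.ext (hp p p rfl)
  simp only [ArrowDiagram.sCount, hpart]

def Esum (n m : ℕ) : (Fin (2 * n) ⊕ Fin (2 * m)) ≃ Fin (2 * (n + m)) :=
  finSumFinEquiv.trans (finCongr (by ring))

lemma Esum_inl {n m : ℕ} (p : Fin (2 * n)) : Esum n m (Sum.inl p) = posL n m p := by
  apply Fin.ext; simp [Esum, posL]

lemma Esum_inr {n m : ℕ} (q : Fin (2 * m)) : Esum n m (Sum.inr q) = posR n m q := by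
  apply Fin.ext; simp [Esum, posR]

lemma pos_cases {n m : ℕ} (x : Fin (2 * (n + m))) :
    (∃ p, x = posL n m p) ∨ ∃ q, x = posR n m q := by
  rcases Nat.lt_or_ge (x : ℕ) (2 * n) with h | h
  · exact Or.inl ⟨⟨x, h⟩, Fin.ext rfl⟩
  · exact Or.inr ⟨⟨(x : ℕ) - 2 * n, by have := x.isLt; omega⟩,
      Fin.ext (by show (x : ℕ) = 2 * n + ((x : ℕ) - 2 * n); omega)⟩

def R1 {n m : ℕ} (P : ArrowDiagram n) (P' : ArrowDiagram m) (hn : 0 < n) (hm : 0 < m) :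
    (Fin (2 * n) ⊕ Fin (2 * m)) → (Fin (2 * n) ⊕ Fin (2 * m)) → Prop
  | .inl p, .inl q => srel P p q
  | .inr p, .inr q => srel P' p q
  | .inl p, .inr q => p = ⟨0, by omega⟩ ∧ q = ⟨0, by omega⟩
  | .inr _, .inl _ => False

lemma card_quot_R1 {n m : ℕ} (P : ArrowDiagram n) (P' : ArrowDiagram m)
    (hn : 0 < n) (hm : 0 < m) :
    Nat.card (Quot (R1 P P' hn hm)) + 1
      = Nat.card (Quot (srel P)) + Nat.card (Quot (srel P')) := by
  classical
  set z0 : Fin (2 * n) := ⟨0, by omega⟩ with hz0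
  set z0' : Fin (2 * m) := ⟨0, by omega⟩ with hz0'
  set c0 : Quot (srel P') := Quot.mk (srel P') z0' with hc0
  have hextra : R1 P P' hn hm (Sum.inl z0) (Sum.inr z0') := ⟨rfl, rfl⟩
  have he : Nonempty (Quot (R1 P P' hn hm) ≃
      (Quot (srel P) ⊕ {c : Quot (srel P') // c ≠ c0})) := by
    refine ⟨⟨Quot.lift (fun x => match x with
        | .inl p => Sum.inl (Quot.mk (srel P) p)
        | .inr q => if h : Quot.mk (srel P') q = c0 then Sum.inl (Quot.mk (srel P) z0)
            else Sum.inr ⟨Quot.mk (srel P') q, h⟩) ?_,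
      Sum.elim (Quot.lift (fun p => Quot.mk (R1 P P' hn hm) (Sum.inl p))
          (fun a b hab => Quot.sound (show R1 P P' hn hm (Sum.inl a) (Sum.inl b) from hab)))
        (fun c => Quot.lift (fun q => Quot.mk (R1 P P' hn hm) (Sum.inr q))
          (fun a b hab => Quot.sound (show R1 P P' hn hm (Sum.inr a) (Sum.inr b) from hab)) c.1),
      ?_, ?_⟩⟩
    · rintro (p | p) (q | q) h
      · exact congrArg Sum.inl (Quot.sound (h : srel P p q))
      · obtain ⟨rfl, rfl⟩ := (h : p = z0 ∧ q = z0')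
        show Sum.inl (Quot.mk (srel P) z0) = dite _ _ _
        rw [dif_pos hc0.symm]
      · exact (h : False).elim
      · have hpq : Quot.mk (srel P') p = Quot.mk (srel P') q := Quot.sound (h : srel P' p q)
        show dite _ _ _ = dite _ _ _
        simp only [hpq]
    · intro x
      induction x using Quot.ind with
      | _ a =>
        rcases a with p | q
        · rfl
        · by_cases h : Quot.mk (srel P') q = c0
          · show Sum.elim _ _ (dite _ _ _) = _
            rw [dif_pos h]
            have hgen : Relation.EqvGen (R1 P P' hn hm) (Sum.inr q) (Sum.inr z0') :=
              eqvGen_map Sum.inr (fun a b hab => hab) (Quot.eqvGen_exact (h.trans hc0))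
            show Quot.mk (R1 P P' hn hm) (Sum.inl z0) = Quot.mk (R1 P P' hn hm) (Sum.inr q)
            rw [Quot.sound hextra, Quot.eqvGen_sound hgen]
          · show Sum.elim _ _ (dite _ _ _) = _
            rw [dif_neg h]
            rfl
    · intro x
      rcases x with c | ⟨c, hc⟩
      · obtain ⟨p, rfl⟩ := Quot.exists_rep c
        rfl
      · obtain ⟨q, rfl⟩ := Quot.exists_rep c
        show (if h : Quot.mk (srel P') q = c0
              then (Sum.inl (Quot.mk (srel P) z0) : Quot (srel P) ⊕ {c : Quot (srel P') // c ≠ c0})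
              else Sum.inr ⟨Quot.mk (srel P') q, h⟩)
          = Sum.inr (⟨Quot.mk (srel P') q, hc⟩ : {c : Quot (srel P') // c ≠ c0})
        rw [dif_neg hc]
  obtain ⟨e⟩ := he
  rw [Nat.card_congr e, Nat.card_sum]
  have hft : Fintype (Quot (srel P')) := Fintype.ofFinite _
  have hcompl := Fintype.card_subtype_compl (fun c : Quot (srel P') => c = c0)
  have hone : Fintype.card {c : Quot (srel P') // c = c0} = 1 := Fintype.card_subtype_eq c0
  have hpos : 0 < Fintype.card (Quot (srel P')) := Fintype.card_pos_iff.mpr ⟨c0⟩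
  have h1 : Nat.card {c : Quot (srel P') // c ≠ c0}
      = Fintype.card {c : Quot (srel P') // ¬ c = c0} := Nat.card_eq_fintype_card
  have h2 : Nat.card (Quot (srel P')) = Fintype.card (Quot (srel P')) := Nat.card_eq_fintype_card
  omega

end SCount

section Main

variable {n m : ℕ} (P : ArrowDiagram n) (P' : ArrowDiagram m) (D : ArrowDiagram (n + m))
  (h1 : ∀ a : Fin n, (D.tail (Fin.castAdd m a) : ℕ) = (P.tail a : ℕ) ∧
      (D.head (Fin.castAdd m a) : ℕ) = (P.head a : ℕ))
  (h2 : ∀ b : Fin m, (D.tail (Fin.natAdd n b) : ℕ) = 2 * n + (P'.tail b : ℕ) ∧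
      (D.head (Fin.natAdd n b) : ℕ) = 2 * n + (P'.head b : ℕ))

include h1 h2

lemma first_castAdd (a : Fin n) : (D.first (Fin.castAdd m a) : ℕ) = (P.first a : ℕ) := by
  rw [first, first, fin_val_min, fin_val_min, (h1 a).1, (h1 a).2]

lemma second_castAdd (a : Fin n) : (D.second (Fin.castAdd m a) : ℕ) = (P.second a : ℕ) := by
  rw [second, second, fin_val_max, fin_val_max, (h1 a).1, (h1 a).2]

lemma first_natAdd (b : Fin m) : (D.first (Fin.natAdd n b) : ℕ) = 2 * n + (P'.first b : ℕ) := by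
  rw [first, first, fin_val_min, fin_val_min, (h2 b).1, (h2 b).2, Nat.add_min_add_left]

lemma second_natAdd (b : Fin m) : (D.second (Fin.natAdd n b) : ℕ) = 2 * n + (P'.second b : ℕ) := by
  rw [second, second, fin_val_max, fin_val_max, (h2 b).1, (h2 b).2, Nat.add_max_add_left]

lemma tailFirst_castAdd (a : Fin n) : D.TailFirst (Fin.castAdd m a) ↔ P.TailFirst a := by
  rw [TailFirst, TailFirst, Fin.lt_def, Fin.lt_def, (h1 a).1, (h1 a).2]

lemma tailFirst_natAdd (b : Fin m) : D.TailFirst (Fin.natAdd n b) ↔ P'.TailFirst b := by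
  rw [TailFirst, TailFirst, Fin.lt_def, Fin.lt_def, (h2 b).1, (h2 b).2]
  omega

lemma interlocked_castAdd (a b : Fin n) :
    D.Interlocked (Fin.castAdd m a) (Fin.castAdd m b) ↔ P.Interlocked a b := by
  rw [Interlocked, Interlocked, Fin.lt_def, Fin.lt_def, Fin.lt_def, Fin.lt_def, Fin.lt_def,
    Fin.lt_def, first_castAdd P P' D h1 h2, first_castAdd P P' D h1 h2,
    second_castAdd P P' D h1 h2, second_castAdd P P' D h1 h2]

lemma interlocked_natAdd (a b : Fin m) :
    D.Interlocked (Fin.natAdd n a) (Fin.natAdd n b) ↔ P'.Interlocked a b := by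
  rw [Interlocked, Interlocked, Fin.lt_def, Fin.lt_def, Fin.lt_def, Fin.lt_def, Fin.lt_def,
    Fin.lt_def, first_natAdd P P' D h1 h2, first_natAdd P P' D h1 h2,
    second_natAdd P P' D h1 h2, second_natAdd P P' D h1 h2]
  omega

lemma not_interlocked_LR (a : Fin n) (b : Fin m) :
    ¬ D.Interlocked (Fin.castAdd m a) (Fin.natAdd n b) := by
  rintro ⟨-, hx, -⟩
  rw [Fin.lt_def, first_natAdd P P' D h1 h2, second_castAdd P P' D h1 h2] at hx
  have := (P.second a).isLt
  omega

lemma not_interlocked_RL (a : Fin m) (b : Fin n) :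
    ¬ D.Interlocked (Fin.natAdd n a) (Fin.castAdd m b) := by
  rintro ⟨hx, -, -⟩
  rw [Fin.lt_def, first_natAdd P P' D h1 h2, first_castAdd P P' D h1 h2] at hx
  have := (P.first b).isLt
  omega

lemma dUp_add : D.dUp = P.dUp + P'.dUp := by
  rw [dUp, dUp, dUp]
  refine filter_split (fun a b => D.Interlocked a b ∧ D.TailFirst a ∧ ¬ D.TailFirst b) (fun a b => P.Interlocked a b ∧ P.TailFirst a ∧ ¬ P.TailFirst b) (fun a b => P'.Interlocked a b ∧ P'.TailFirst a ∧ ¬ P'.TailFirst b) ?_ ?_ ?_ ?_ <;> intro a b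
  · simp only [interlocked_castAdd P P' D h1 h2, tailFirst_castAdd P P' D h1 h2]
  · simp only [interlocked_natAdd P P' D h1 h2, tailFirst_natAdd P P' D h1 h2]
  · exact fun h => not_interlocked_LR P P' D h1 h2 a b h.1
  · exact fun h => not_interlocked_RL P P' D h1 h2 a b h.1

lemma dLeft_add : D.dLeft = P.dLeft + P'.dLeft := by
  rw [dLeft, dLeft, dLeft]
  refine filter_split (fun a b => D.Interlocked a b ∧ D.TailFirst a ∧ D.TailFirst b) (fun a b => P.Interlocked a b ∧ P.TailFirst a ∧ P.TailFirst b) (fun a b => P'.Interlocked a b ∧ P'.TailFirst a ∧ P'.TailFirst b) ?_ ?_ ?_ ?_ <;> intro a b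
  · simp only [interlocked_castAdd P P' D h1 h2, tailFirst_castAdd P P' D h1 h2]
  · simp only [interlocked_natAdd P P' D h1 h2, tailFirst_natAdd P P' D h1 h2]
  · exact fun h => not_interlocked_LR P P' D h1 h2 a b h.1
  · exact fun h => not_interlocked_RL P P' D h1 h2 a b h.1

lemma dRight_add : D.dRight = P.dRight + P'.dRight := by
  rw [dRight, dRight, dRight]
  refine filter_split (fun a b => D.Interlocked a b ∧ ¬ D.TailFirst a ∧ ¬ D.TailFirst b) (fun a b => P.Interlocked a b ∧ ¬ P.TailFirst a ∧ ¬ P.TailFirst b) (fun a b => P'.Interlocked a b ∧ ¬ P'.TailFirst a ∧ ¬ P'.TailFirst b) ?_ ?_ ?_ ?_ <;> intro a b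
  · simp only [interlocked_castAdd P P' D h1 h2, tailFirst_castAdd P P' D h1 h2]
  · simp only [interlocked_natAdd P P' D h1 h2, tailFirst_natAdd P P' D h1 h2]
  · exact fun h => not_interlocked_LR P P' D h1 h2 a b h.1
  · exact fun h => not_interlocked_RL P P' D h1 h2 a b h.1

lemma dDown_add : D.dDown = P.dDown + P'.dDown := by
  rw [dDown, dDown, dDown]
  refine filter_split (fun a b => D.Interlocked a b ∧ ¬ D.TailFirst a ∧ D.TailFirst b) (fun a b => P.Interlocked a b ∧ ¬ P.TailFirst a ∧ P.TailFirst b) (fun a b => P'.Interlocked a b ∧ ¬ P'.TailFirst a ∧ P'.TailFirst b) ?_ ?_ ?_ ?_ <;> intro a b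
  · simp only [interlocked_castAdd P P' D h1 h2, tailFirst_castAdd P P' D h1 h2]
  · simp only [interlocked_natAdd P P' D h1 h2, tailFirst_natAdd P P' D h1 h2]
  · exact fun h => not_interlocked_LR P P' D h1 h2 a b h.1
  · exact fun h => not_interlocked_RL P P' D h1 h2 a b h.1



lemma partner_posL (p : Fin (2 * n)) : (D.partner (posL n m p) : ℕ) = (P.partner p : ℕ) := by
  obtain ⟨a, h | h⟩ := P.endpoint_exists p
  · have ht : D.tail (Fin.castAdd m a) = posL n m p := by
      apply Fin.ext; rw [(h1 a).1, h]; rfl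
    rw [D.partner_tail ht, (h1 a).2, P.partner_tail h]
  · have ht : D.head (Fin.castAdd m a) = posL n m p := by
      apply Fin.ext; rw [(h1 a).2, h]; rfl
    rw [D.partner_head ht, (h1 a).1, P.partner_head h]

lemma partner_posR (q : Fin (2 * m)) :
    (D.partner (posR n m q) : ℕ) = 2 * n + (P'.partner q : ℕ) := by
  obtain ⟨b, h | h⟩ := P'.endpoint_exists q
  · have ht : D.tail (Fin.natAdd n b) = posR n m q := by
      apply Fin.ext; rw [(h2 b).1, h]; rfl
    rw [D.partner_tail ht, (h2 b).2, P'.partner_tail h]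
  · have ht : D.head (Fin.natAdd n b) = posR n m q := by
      apply Fin.ext; rw [(h2 b).2, h]; rfl
    rw [D.partner_head ht, (h2 b).1, P'.partner_head h]

lemma srelD_posL_lt (hn : 0 < n) (p : Fin (2 * n)) (h : (P.partner p : ℕ) + 1 < 2 * n) :
    srel D (posL n m p) (posL n m (P.sig hn p)) := by
  show ((D.partner (posL n m p) : ℕ) + 1) % (2 * (n + m)) = _
  rw [partner_posL P P' D h1 h2]
  show ((P.partner p : ℕ) + 1) % (2 * (n + m)) = ((P.partner p : ℕ) + 1) % (2 * n)
  rw [Nat.mod_eq_of_lt h, Nat.mod_eq_of_lt (by omega)]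

lemma srelD_posL_wrap (hm : 0 < m) (p : Fin (2 * n)) (h : (P.partner p : ℕ) + 1 = 2 * n) :
    srel D (posL n m p) (posR n m ⟨0, by omega⟩) := by
  show ((D.partner (posL n m p) : ℕ) + 1) % (2 * (n + m)) = _
  rw [partner_posL P P' D h1 h2, h]
  show (2 * n) % (2 * (n + m)) = 2 * n + 0
  rw [Nat.mod_eq_of_lt (by omega)]
  omega

lemma srelD_posR_lt (hm : 0 < m) (q : Fin (2 * m)) (h : (P'.partner q : ℕ) + 1 < 2 * m) :
    srel D (posR n m q) (posR n m (P'.sig hm q)) := by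
  show ((D.partner (posR n m q) : ℕ) + 1) % (2 * (n + m)) = _
  rw [partner_posR P P' D h1 h2]
  show (2 * n + (P'.partner q : ℕ) + 1) % (2 * (n + m))
      = 2 * n + ((P'.partner q : ℕ) + 1) % (2 * m)
  rw [Nat.mod_eq_of_lt h, Nat.mod_eq_of_lt (by omega)]
  omega

lemma srelD_posR_wrap (hn : 0 < n) (q : Fin (2 * m)) (h : (P'.partner q : ℕ) + 1 = 2 * m) :
    srel D (posR n m q) (posL n m ⟨0, by omega⟩) := by
  show ((D.partner (posR n m q) : ℕ) + 1) % (2 * (n + m)) = _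
  rw [partner_posR P P' D h1 h2]
  show (2 * n + (P'.partner q : ℕ) + 1) % (2 * (n + m)) = 0
  have he : 2 * n + (P'.partner q : ℕ) + 1 = 2 * (n + m) := by omega
  rw [he, Nat.mod_self]

set_option maxHeartbeats 2000000 in
lemma bridge (hn : 0 < n) (hm : 0 < m) :
    Relation.EqvGen (srel D) (posR n m ⟨0, by omega⟩) (posL n m ⟨0, by omega⟩) := by
  set z0' : Fin (2 * m) := ⟨0, by omega⟩ with hz
  set q1 : Fin (2 * m) := P'.partner ⟨2 * m - 1, by omega⟩ with hq1def
  have hq1 : (P'.partner q1 : ℕ) + 1 = 2 * m := by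
    rw [hq1def, P'.partner_partner]
    show (2 * m - 1) + 1 = 2 * m
    omega
  have hstep : srel D (posR n m q1) (posL n m ⟨0, by omega⟩) :=
    srelD_posR_wrap P P' D h1 h2 hn q1 hq1
  have hsig : P'.sigPerm hm q1 = z0' := by
    apply Fin.ext
    show ((P'.partner q1 : ℕ) + 1) % (2 * m) = 0
    rw [hq1, Nat.mod_self]
  obtain ⟨j, hj⟩ := P'.exists_pow_eq hm q1
  rw [hsig] at hj
  have claim : ∀ i : ℕ,
      Relation.EqvGen (srel D) (posR n m z0') (posR n m (((P'.sigPerm hm) ^ i) z0'))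
      ∨ Relation.EqvGen (srel D) (posR n m z0') (posL n m ⟨0, by omega⟩) := by
    intro i
    induction i with
    | zero =>
      left
      simp only [pow_zero, Equiv.Perm.coe_one, id_eq]
      exact Relation.EqvGen.refl _
    | succ i ih =>
      rcases ih with h | h
      · set x := ((P'.sigPerm hm) ^ i) z0' with hx
        rcases Nat.lt_or_ge ((P'.partner x : ℕ) + 1) (2 * m) with hc | hc
        · left
          have hpow : ((P'.sigPerm hm) ^ (i + 1)) z0' = P'.sig hm x := by
            rw [pow_succ', Equiv.Perm.mul_apply, ← hx]
            rfl
          rw [hpow]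
          exact Relation.EqvGen.trans _ _ _ h
            (Relation.EqvGen.rel _ _ (srelD_posR_lt P P' D h1 h2 hm x hc))
        · right
          have hceq : (P'.partner x : ℕ) + 1 = 2 * m := by
            have := (P'.partner x).isLt; omega
          exact Relation.EqvGen.trans _ _ _ h
            (Relation.EqvGen.rel _ _ (srelD_posR_wrap P P' D h1 h2 hn x hceq))
      · right; exact h
  rcases claim j with h | h
  · rw [hj] at h
    exact Relation.EqvGen.trans _ _ _ h (Relation.EqvGen.rel _ _ hstep)
  · exact h

set_option maxHeartbeats 2000000 in
lemma quot_srelD_equiv (hn : 0 < n) (hm : 0 < m) :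
    Nonempty (Quot (R1 P P' hn hm) ≃ Quot (srel D)) := by
  refine ⟨quotEquivOfEqvGen (Esum n m) ?_ ?_⟩
  · rintro (p | p) (q | q) h
    · -- inl inl
      have hq : q = P.sig hn p := Fin.ext (h : _ = (q : ℕ)).symm
      subst hq
      rw [Esum_inl, Esum_inl]
      rcases Nat.lt_or_ge ((P.partner p : ℕ) + 1) (2 * n) with hc | hc
      · exact Relation.EqvGen.rel _ _ (srelD_posL_lt P P' D h1 h2 hn p hc)
      · have hceq : (P.partner p : ℕ) + 1 = 2 * n := by
          have := (P.partner p).isLt; omega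
        have hsg : P.sig hn p = (⟨0, by omega⟩ : Fin (2 * n)) := by
          apply Fin.ext
          show ((P.partner p : ℕ) + 1) % (2 * n) = 0
          rw [hceq, Nat.mod_self]
        rw [hsg]
        exact Relation.EqvGen.trans _ _ _
          (Relation.EqvGen.rel _ _ (srelD_posL_wrap P P' D h1 h2 hm p hceq))
          (bridge P P' D h1 h2 hn hm)
    · -- inl inr : extra pair
      obtain ⟨rfl, rfl⟩ := (h : _ ∧ _)
      rw [Esum_inl, Esum_inr]
      exact Relation.EqvGen.symm _ _ (bridge P P' D h1 h2 hn hm)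
    · exact (h : False).elim
    · -- inr inr
      have hq : q = P'.sig hm p := Fin.ext (h : _ = (q : ℕ)).symm
      subst hq
      rw [Esum_inr, Esum_inr]
      rcases Nat.lt_or_ge ((P'.partner p : ℕ) + 1) (2 * m) with hc | hc
      · exact Relation.EqvGen.rel _ _ (srelD_posR_lt P P' D h1 h2 hm p hc)
      · have hceq : (P'.partner p : ℕ) + 1 = 2 * m := by
          have := (P'.partner p).isLt; omega
        have hsg : P'.sig hm p = (⟨0, by omega⟩ : Fin (2 * m)) := by
          apply Fin.ext
          show ((P'.partner p : ℕ) + 1) % (2 * m) = 0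
          rw [hceq, Nat.mod_self]
        rw [hsg]
        exact Relation.EqvGen.trans _ _ _
          (Relation.EqvGen.rel _ _ (srelD_posR_wrap P P' D h1 h2 hn p hceq))
          (Relation.EqvGen.symm _ _ (bridge P P' D h1 h2 hn hm))
  · intro u v h
    have hsymL : ∀ p : Fin (2 * n), (Esum n m).symm (posL n m p) = Sum.inl p := by
      intro p; rw [← Esum_inl, Equiv.symm_apply_apply]
    have hsymR : ∀ q : Fin (2 * m), (Esum n m).symm (posR n m q) = Sum.inr q := by
      intro q; rw [← Esum_inr, Equiv.symm_apply_apply]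
    rcases pos_cases u with ⟨p, rfl⟩ | ⟨q, rfl⟩
    · have hv : ((P.partner p : ℕ) + 1) % (2 * (n + m)) = (v : ℕ) := by
        rw [← partner_posL P P' D h1 h2 p]; exact h
      rcases Nat.lt_or_ge ((P.partner p : ℕ) + 1) (2 * n) with hc | hc
      · have hveq : v = posL n m (P.sig hn p) := by
          apply Fin.ext
          rw [← hv, Nat.mod_eq_of_lt (by omega)]
          show _ = ((P.partner p : ℕ) + 1) % (2 * n)
          rw [Nat.mod_eq_of_lt hc]
        subst hveq
        rw [hsymL, hsymL]
        exact Relation.EqvGen.rel _ _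
          (show srel P p (P.sig hn p) from rfl)
      · have hceq : (P.partner p : ℕ) + 1 = 2 * n := by
          have := (P.partner p).isLt; omega
        have hveq : v = posR n m ⟨0, by omega⟩ := by
          apply Fin.ext
          rw [← hv, hceq, Nat.mod_eq_of_lt (by omega)]
          show 2 * n = 2 * n + 0
          omega
        rw [hveq, hsymL, hsymR]
        refine Relation.EqvGen.trans _ _ _
          (Relation.EqvGen.rel _ _ (show R1 P P' hn hm (Sum.inl p) (Sum.inl ⟨0, by omega⟩) from ?_))
          (Relation.EqvGen.rel _ _ (show R1 P P' hn hm (Sum.inl ⟨0, by omega⟩)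
            (Sum.inr ⟨0, by omega⟩) from ⟨rfl, rfl⟩))
        show ((P.partner p : ℕ) + 1) % (2 * n) = 0
        rw [hceq, Nat.mod_self]
    · have hv : (2 * n + (P'.partner q : ℕ) + 1) % (2 * (n + m)) = (v : ℕ) := by
        rw [← partner_posR P P' D h1 h2 q]; exact h
      rcases Nat.lt_or_ge ((P'.partner q : ℕ) + 1) (2 * m) with hc | hc
      · have hveq : v = posR n m (P'.sig hm q) := by
          apply Fin.ext
          rw [← hv, Nat.mod_eq_of_lt (by omega)]
          show 2 * n + (P'.partner q : ℕ) + 1 = 2 * n + ((P'.partner q : ℕ) + 1) % (2 * m)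
          rw [Nat.mod_eq_of_lt hc]
          omega
        subst hveq
        rw [hsymR, hsymR]
        exact Relation.EqvGen.rel _ _ (show srel P' q (P'.sig hm q) from rfl)
      · have hceq : (P'.partner q : ℕ) + 1 = 2 * m := by
          have := (P'.partner q).isLt; omega
        have hveq : v = posL n m ⟨0, by omega⟩ := by
          apply Fin.ext
          rw [← hv]
          have he2 : 2 * n + (P'.partner q : ℕ) + 1 = 2 * (n + m) := by omega
          rw [he2, Nat.mod_self]
          rfl
        rw [hveq, hsymR, hsymL]
        refine Relation.EqvGen.trans _ _ _
          (Relation.EqvGen.rel _ _ (show R1 P P' hn hm (Sum.inr q) (Sum.inr ⟨0, by omega⟩) from ?_))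
          (Relation.EqvGen.symm _ _ (Relation.EqvGen.rel _ _
            (show R1 P P' hn hm (Sum.inl ⟨0, by omega⟩)
              (Sum.inr ⟨0, by omega⟩) from ⟨rfl, rfl⟩)))
        show ((P'.partner q : ℕ) + 1) % (2 * m) = 0
        rw [hceq, Nat.mod_self]

lemma sCount_add_pos (hn : 0 < n) (hm : 0 < m) :
    D.sCount + 1 = P.sCount + P'.sCount := by
  obtain ⟨e⟩ := quot_srelD_equiv P P' D h1 h2 hn hm
  rw [sCount_def D (by omega), sCount_def P (by omega), sCount_def P' (by omega),
    ← Nat.card_congr e]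
  exact card_quot_R1 P P' hn hm

lemma sCount_add : D.sCount + 1 = P.sCount + P'.sCount := by
  rcases Nat.eq_zero_or_pos n with hn | hn
  · have hP : P.sCount = 1 := sCount_zero P hn
    have hD : D.sCount = P'.sCount := by
      apply sCount_congr (by omega)
      intro p q hpq
      have hx : p = posR n m q := by
        apply Fin.ext
        show (p : ℕ) = 2 * n + (q : ℕ)
        omega
      rw [hx, partner_posR P P' D h1 h2]
      omega
    rw [hP, hD]
    omega
  rcases Nat.eq_zero_or_pos m with hm | hm
  · have hP' : P'.sCount = 1 := sCount_zero P' hm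
    have hD : D.sCount = P.sCount := by
      apply sCount_congr (by omega)
      intro p q hpq
      have hx : p = posL n m q := Fin.ext hpq
      rw [hx, partner_posL P P' D h1 h2]
    rw [hP', hD]
  · exact sCount_add_pos P P' D h1 h2 hn hm

end Main
end MuAux
end MuAux

open ArrowDiagram in
/-- The function `μ = 2·d⊥ − 2·d← − 2·d→ + 2·d↑ + s − c` satisfies
`μ(P # P') = μ(P) + μ(P') − 1` for any connected sum of spherical curves (the
Gauss words are concatenated). -/
theorem mu_connected_sum
    {n m : ℕ} (P : ArrowDiagram n) (P' : ArrowDiagram m)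
    (D : ArrowDiagram (n + m))
    (h1 : ∀ a : Fin n, (D.tail (Fin.castAdd m a) : ℕ) = (P.tail a : ℕ) ∧
      (D.head (Fin.castAdd m a) : ℕ) = (P.head a : ℕ))
    (h2 : ∀ b : Fin m, (D.tail (Fin.natAdd n b) : ℕ) = 2 * n + (P'.tail b : ℕ) ∧
      (D.head (Fin.natAdd n b) : ℕ) = 2 * n + (P'.head b : ℕ)) :
    2 * (D.dDown : ℤ) - 2 * D.dLeft - 2 * D.dRight + 2 * D.dUp
        + D.sCount - D.cCount =
      (2 * (P.dDown : ℤ) - 2 * P.dLeft - 2 * P.dRight + 2 * P.dUp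
        + P.sCount - P.cCount) +
      (2 * (P'.dDown : ℤ) - 2 * P'.dLeft - 2 * P'.dRight + 2 * P'.dUp
        + P'.sCount - P'.cCount) - 1 := by
  have hdU := MuAux.dUp_add P P' D h1 h2
  have hdL := MuAux.dLeft_add P P' D h1 h2
  have hdR := MuAux.dRight_add P P' D h1 h2
  have hdD := MuAux.dDown_add P P' D h1 h2
  have hs := MuAux.sCount_add P P' D h1 h2
  have hc : D.cCount = P.cCount + P'.cCount := rfl
  omega
end

section
/- Suppose I is an integer-valued function on spherical curves whose changes under the moves RI, s2a, w2a, s3a, w3a are 0, 0, +1, +1, −1 respectively, and J is another such function with the same change vector, and both vanish on the simple closed curve. Then I = J on all spherical curves. In particular, J⁺/2 + St equals d↑ − d← − d→ + d⊥ on all spherical curves. -/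
/-- If `I` and `J` are integer-valued functions on spherical curves whose changes
under the moves RI, s2a, w2a, s3a, w3a are `0, 0, +1, +1, −1` respectively, any
two spherical curves are connected by a finite sequence of these moves (and their
inverses), and both functions vanish on the simple closed curve `o`, then `I = J`
on all spherical curves.  In particular `J⁺/2 + St` equals
`d↑ − d← − d→ + d⊥` on all spherical curves. -/
theorem eq_of_same_change_table
    {SC : Type*} (r1 s2a w2a s3a w3a : SC → SC → Prop) (o : SC)
    (hconn : ∀ P : SC, Relation.ReflTransGen
      (fun P Q => r1 P Q ∨ r1 Q P ∨ s2a P Q ∨ s2a Q P ∨ w2a P Q ∨ w2a Q P ∨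
        s3a P Q ∨ s3a Q P ∨ w3a P Q ∨ w3a Q P) P o)
    (I J : SC → ℤ)
    (hI1 : ∀ P Q, r1 P Q → I Q = I P)
    (hI2 : ∀ P Q, s2a P Q → I Q = I P)
    (hI3 : ∀ P Q, w2a P Q → I Q = I P + 1)
    (hI4 : ∀ P Q, s3a P Q → I Q = I P + 1)
    (hI5 : ∀ P Q, w3a P Q → I Q = I P - 1)
    (hJ1 : ∀ P Q, r1 P Q → J Q = J P)
    (hJ2 : ∀ P Q, s2a P Q → J Q = J P)
    (hJ3 : ∀ P Q, w2a P Q → J Q = J P + 1)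
    (hJ4 : ∀ P Q, s3a P Q → J Q = J P + 1)
    (hJ5 : ∀ P Q, w3a P Q → J Q = J P - 1)
    (hIo : I o = 0) (hJo : J o = 0) :
    ∀ P : SC, I P = J P := by
  intro P
  have key : ∀ {A B : SC}, Relation.ReflTransGen
      (fun P Q => r1 P Q ∨ r1 Q P ∨ s2a P Q ∨ s2a Q P ∨ w2a P Q ∨ w2a Q P ∨
        s3a P Q ∨ s3a Q P ∨ w3a P Q ∨ w3a Q P) A B →
      I A - J A = I B - J B := by
    intro A B h
    induction h with
    | refl => rfl
    | tail _ hstep ih =>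
      rename_i b c _
      rcases hstep with h|h|h|h|h|h|h|h|h|h
      · have := hI1 _ _ h; have := hJ1 _ _ h; omega
      · have := hI1 _ _ h; have := hJ1 _ _ h; omega
      · have := hI2 _ _ h; have := hJ2 _ _ h; omega
      · have := hI2 _ _ h; have := hJ2 _ _ h; omega
      · have := hI3 _ _ h; have := hJ3 _ _ h; omega
      · have := hI3 _ _ h; have := hJ3 _ _ h; omega
      · have := hI4 _ _ h; have := hJ4 _ _ h; omega
      · have := hI4 _ _ h; have := hJ4 _ _ h; omega
      · have := hI5 _ _ h; have := hJ5 _ _ h; omega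
      · have := hI5 _ _ h; have := hJ5 _ _ h; omega
  have := key (hconn P)
  omega
end
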